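/- arXiv:2101.04313 — 4 statements merged into one kernel-verified Lean document; each statement's English description precedes it below -/
import Mathlib

section
/- Let p be an odd prime, d ≥ 1, and G = (ℤ_p)^d ⋊ ℤ₂ with the ℤ₂ factor acting by inversion. Then the set S of all involutions of G equals G \ (ℤ_p)^d, has size p^d, and Aut(G, S) = Aut(G) ≅ AGL(d, p) acts 2-transitively on S. -/
/-!
Write `r v = ι(v) z` for `v ∈ V = (ℤ_p)^d`, where `ι : V ≅ N`. Every element outside `N` is such a
reflection and is an involution, while `N ≅ V` has no involutions because `p` is odd; so `N` is
characteristic and `S = G \ N` is a copy of `V`. Since `r a * r b = ι(a - b)`, we get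
`r a * r b * r c = r (a - b + c)`: an automorphism permutes `S ≅ V` preserving `a - b + c`, hence
acts on `V` by an affine bijection, and it is determined by that action because the reflections
generate `G`. Conversely an affine `ψ` with linear part `L` gives the automorphism
`ι v ↦ ι (L v)`, `r v ↦ r (ψ v)`. Thus `Aut G ≅ AGL(d, p)`, and `Aut G` is 2-transitive on `S`
because `AGL(d, p)` is 2-transitive on `V`.
-/

open Function

theorem LinearEquiv.exists_apply_eq_of_ne_zero {K V : Type*} [Field K] [AddCommGroup V]
    [Module K V] {u w : V} (hu : u ≠ 0) (hw : w ≠ 0) : ∃ L : V ≃ₗ[K] V, L u = w := by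
  obtain ⟨L, hL⟩ := Submodule.exists_linearEquiv_restrict_eq
    (coord K V u hu ≪≫ₗ toSpanNonzeroSingleton K V w hw)
  refine ⟨L, ?_⟩
  simpa [coord_self] using (hL ⟨u, Submodule.mem_span_singleton_self u⟩).symm

theorem AffineEquiv.exists_apply_eq_pair {K V : Type*} [Field K] [AddCommGroup V]
    [Module K V] {a b c e : V} (hab : a ≠ b) (hce : c ≠ e) :
    ∃ ψ : V ≃ᵃ[K] V, ψ a = c ∧ ψ b = e := by
  obtain ⟨L, hL⟩ := LinearEquiv.exists_apply_eq_of_ne_zero (K := K)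
    (sub_ne_zero.2 hab.symm) (sub_ne_zero.2 hce.symm)
  refine ⟨L.toAffineEquiv.trans (AffineEquiv.constVAdd K V (c - L a)), by simp, ?_⟩
  rw [map_sub] at hL
  simp only [AffineEquiv.trans_apply, LinearEquiv.coe_toAffineEquiv, AffineEquiv.constVAdd_apply,
    vadd_eq_add]
  rw [show c - L a + L b = c + (L b - L a) by abel, hL, add_sub_cancel]

theorem AffineEquiv.exists_coe_eq_of_map_sub_add {n : ℕ} {V : Type*} [AddCommGroup V]
    [Module (ZMod n) V] {f : V → V} (hf : Bijective f)
    (h : ∀ a b c, f (a - b + c) = f a - f b + f c) : ∃ ψ : V ≃ᵃ[ZMod n] V, ⇑ψ = f := by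
  have hadd (v w : V) : f (v + w) = f v - f 0 + f w := by simpa using h v 0 w
  let L : V →+ V :=
    { toFun v := f v - f 0
      map_zero' := sub_self _
      map_add' v w := by rw [hadd]; abel }
  let ψ : V →ᵃ[ZMod n] V :=
    { toFun := f
      linear := L.toZModLinearMap n
      map_vadd' w v := hadd v w }
  exact ⟨AffineEquiv.ofBijective (φ := ψ) hf, rfl⟩

theorem Subgroup.Characteristic.apply_mem_iff {G : Type*} [Group G] {N : Subgroup G}
    [hN : N.Characteristic] (τ : MulAut G) {g : G} : τ g ∈ N ↔ g ∈ N :=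
  SetLike.ext_iff.mp (hN.fixed τ) g

structure IsGeneralizedDihedral {G : Type*} [Group G] (N : Subgroup G) (z : G) : Prop where
  mul_self : z * z = 1
  notMem : z ∉ N
  conj_eq_inv : ∀ n ∈ N, z * n * z = n⁻¹
  mem_or_mul_mem : ∀ g, g ∈ N ∨ g * z ∈ N

namespace IsGeneralizedDihedral

section

variable {G : Type*} [Group G] {N : Subgroup G} {z : G} (hD : IsGeneralizedDihedral N z)
include hD

theorem mul_self_eq_one_of_notMem {g : G} (hg : g ∉ N) : g * g = 1 := by
  have hgz := (hD.mem_or_mul_mem g).resolve_left hg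
  calc g * g = g * z * (z * (g * z) * z) := by simp [mul_assoc, ← mul_assoc z z, hD.mul_self]
    _ = 1 := by rw [hD.conj_eq_inv _ hgz, mul_inv_cancel]

theorem mul_self_eq_one_and_ne_one_iff (hN : ∀ n ∈ N, n * n = 1 → n = 1) {g : G} :
    g * g = 1 ∧ g ≠ 1 ↔ g ∉ N :=
  ⟨fun h hg => h.2 (hN g hg h.1), fun hg =>
    ⟨hD.mul_self_eq_one_of_notMem hg, fun h => hg (h ▸ N.one_mem)⟩⟩

theorem characteristic (hN : ∀ n ∈ N, n * n = 1 → n = 1) : N.Characteristic := by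
  refine Subgroup.characteristic_iff_comap_eq.2 fun τ => SetLike.ext fun g => ?_
  rw [Subgroup.mem_comap, ← not_iff_not, ← hD.mul_self_eq_one_and_ne_one_iff hN,
    ← hD.mul_self_eq_one_and_ne_one_iff hN]
  simp [← map_mul]

theorem mul_notMem {n : G} (hn : n ∈ N) : n * z ∉ N := fun h =>
  hD.notMem (by simpa using N.mul_mem (N.inv_mem hn) h)

theorem card_notMem : Nat.card {g : G | g ∉ N} = Nat.card N :=
  Nat.card_congr
    { toFun g := ⟨g * z, (hD.mem_or_mul_mem g).resolve_left g.2⟩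
      invFun n := ⟨n * z, hD.mul_notMem n.2⟩
      left_inv g := Subtype.ext (by simp [mul_assoc, hD.mul_self])
      right_inv n := Subtype.ext (by simp [mul_assoc, hD.mul_self]) }

end

variable {G V : Type*} [Group G] [AddCommGroup V] {N : Subgroup G}
  (φ : N ≃* Multiplicative V) {z : G}

def rotation (v : V) : G := (φ.symm (.ofAdd v) : G)

variable (z) in
def reflection (v : V) : G := rotation φ v * z

theorem rotation_mem (v : V) : rotation φ v ∈ N := (φ.symm _).2

theorem rotation_add (v w : V) : rotation φ (v + w) = rotation φ v * rotation φ w := by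
  simp [rotation]

theorem rotation_neg (v : V) : rotation φ (-v) = (rotation φ v)⁻¹ := by
  simp [rotation]

theorem rotation_injective : Injective (rotation φ) := by
  intro v w h
  simpa [rotation] using h

theorem exists_rotation_eq {g : G} (hg : g ∈ N) : ∃ v, rotation φ v = g :=
  ⟨(φ ⟨g, hg⟩).toAdd, by simp [rotation]⟩

theorem rotation_mul_reflection (v w : V) :
    rotation φ v * reflection φ z w = reflection φ z (v + w) := by
  rw [reflection, reflection, rotation_add, mul_assoc]

variable (z) in
theorem reflection_injective : Injective (reflection φ z) :=
  (mul_left_injective z).comp (rotation_injective φ)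

variable {φ} (hD : IsGeneralizedDihedral N z)
include hD

theorem z_mul_rotation (v : V) : z * rotation φ v = rotation φ (-v) * z := by
  rw [rotation_neg, ← hD.conj_eq_inv _ (rotation_mem φ v), mul_assoc _ z z, hD.mul_self, mul_one]

theorem reflection_mul_rotation (v w : V) :
    reflection φ z v * rotation φ w = reflection φ z (v - w) := by
  rw [reflection, reflection, mul_assoc, hD.z_mul_rotation, ← mul_assoc, ← rotation_add,
    sub_eq_add_neg]

theorem reflection_mul_reflection (v w : V) :
    reflection φ z v * reflection φ z w = rotation φ (v - w) := by
  rw [reflection.eq_1 φ z w, ← mul_assoc, hD.reflection_mul_rotation, reflection, mul_assoc,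
    hD.mul_self, mul_one]

theorem reflection_mul_reflection_mul_reflection (a b c : V) :
    reflection φ z a * reflection φ z b * reflection φ z c = reflection φ z (a - b + c) := by
  rw [hD.reflection_mul_reflection, rotation_mul_reflection]

theorem reflection_notMem (v : V) : reflection φ z v ∉ N :=
  hD.mul_notMem (rotation_mem φ v)

theorem exists_reflection_eq {g : G} (hg : g ∉ N) : ∃ v, reflection φ z v = g := by
  obtain ⟨v, hv⟩ := exists_rotation_eq φ ((hD.mem_or_mul_mem g).resolve_left hg)
  exact ⟨v, by rw [reflection, hv, mul_assoc, hD.mul_self, mul_one]⟩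

variable (φ) in
noncomputable def sumEquiv : V ⊕ V ≃ G :=
  Equiv.ofBijective (Sum.elim (rotation φ) (reflection φ z))
    ⟨(rotation_injective φ).sumElim (reflection_injective φ z)
      fun v w h => hD.reflection_notMem w (h ▸ rotation_mem φ v),
     fun g => (em (g ∈ N)).elim
      (fun hg => (exists_rotation_eq φ hg).elim fun v hv => ⟨.inl v, hv⟩)
      (fun hg => (hD.exists_reflection_eq hg).elim fun v hv => ⟨.inr v, hv⟩)⟩

theorem sumEquiv_inl (v : V) : hD.sumEquiv φ (.inl v) = rotation φ v := rfl

theorem sumEquiv_inr (v : V) : hD.sumEquiv φ (.inr v) = reflection φ z v := rfl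

theorem sumEquiv_symm_rotation (v : V) : (hD.sumEquiv φ).symm (rotation φ v) = .inl v :=
  (hD.sumEquiv φ).symm_apply_eq.2 rfl

theorem sumEquiv_symm_reflection (v : V) :
    (hD.sumEquiv φ).symm (reflection φ z v) = .inr v :=
  (hD.sumEquiv φ).symm_apply_eq.2 rfl

theorem mulAut_ext {σ τ : MulAut G}
    (h : ∀ v, σ (reflection φ z v) = τ (reflection φ z v)) : σ = τ := by
  ext g
  obtain ⟨v | v, rfl⟩ := (hD.sumEquiv φ).surjective g
  · rw [sumEquiv_inl, ← sub_zero v, ← hD.reflection_mul_reflection, map_mul, map_mul, h, h]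
  · exact h v

variable {k : Type*} [Ring k] [Module k V]

variable (φ) in
noncomputable def affinePerm (ψ : V ≃ᵃ[k] V) : Equiv.Perm G :=
  (hD.sumEquiv φ).symm.trans ((Equiv.sumCongr ψ.linear.toEquiv ψ.toEquiv).trans (hD.sumEquiv φ))

theorem affinePerm_rotation (ψ : V ≃ᵃ[k] V) (v : V) :
    hD.affinePerm φ ψ (rotation φ v) = rotation φ (ψ.linear v) := by
  simp [affinePerm, sumEquiv_symm_rotation, sumEquiv_inl]

theorem affinePerm_reflection (ψ : V ≃ᵃ[k] V) (v : V) :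
    hD.affinePerm φ ψ (reflection φ z v) = reflection φ z (ψ v) := by
  simp [affinePerm, sumEquiv_symm_reflection, sumEquiv_inr]

theorem affinePerm_mul (ψ : V ≃ᵃ[k] V) (a b : G) :
    hD.affinePerm φ ψ (a * b) = hD.affinePerm φ ψ a * hD.affinePerm φ ψ b := by
  obtain ⟨v | v, rfl⟩ := (hD.sumEquiv φ).surjective a <;>
    obtain ⟨w | w, rfl⟩ := (hD.sumEquiv φ).surjective b <;>
    simp only [sumEquiv_inl, sumEquiv_inr, ← rotation_add, rotation_mul_reflection,
      hD.reflection_mul_rotation, hD.reflection_mul_reflection, affinePerm_rotation,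
      affinePerm_reflection]
  · rw [map_add, rotation_add]
  · rw [← vadd_eq_add, ψ.map_vadd, vadd_eq_add]
  · rw [sub_eq_neg_add, ← vadd_eq_add, ψ.map_vadd, vadd_eq_add, map_neg, neg_add_eq_sub]
  · exact congrArg (rotation φ) (ψ.toAffineMap.linearMap_vsub v w)

variable (φ) in
noncomputable def ofAffine (ψ : V ≃ᵃ[k] V) : MulAut G :=
  MulEquiv.mk' (hD.affinePerm φ ψ) (hD.affinePerm_mul ψ)

theorem ofAffine_reflection (ψ : V ≃ᵃ[k] V) (v : V) :
    hD.ofAffine φ ψ (reflection φ z v) = reflection φ z (ψ v) :=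
  hD.affinePerm_reflection ψ v

variable (φ k) in
noncomputable def ofAffineHom : (V ≃ᵃ[k] V) →* MulAut G where
  toFun := hD.ofAffine φ
  map_one' := hD.mulAut_ext (φ := φ) fun v => by simp [ofAffine_reflection]
  map_mul' ψ ψ' := hD.mulAut_ext (φ := φ) fun v => by
    simp [ofAffine_reflection, AffineEquiv.coe_mul]

theorem ofAffineHom_injective : Injective (hD.ofAffineHom φ k) := fun ψ ψ' h =>
  AffineEquiv.ext fun v => reflection_injective φ z <| by
    simpa [ofAffineHom, ofAffine_reflection] using DFunLike.congr_fun h (reflection φ z v)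

theorem exists_ofAffine_eq {n : ℕ} [Module (ZMod n) V] [N.Characteristic] (τ : MulAut G) :
    ∃ ψ : V ≃ᵃ[ZMod n] V, hD.ofAffine φ ψ = τ := by
  have hS (σ : MulAut G) (v : V) : ∃ w, reflection φ z w = σ (reflection φ z v) :=
    hD.exists_reflection_eq
      ((Subgroup.Characteristic.apply_mem_iff σ).not.2 (hD.reflection_notMem v))
  choose f hf using hS τ
  have hf_bij : Bijective f := by
    refine ⟨fun v w h => reflection_injective φ z (τ.injective ?_), fun w => ?_⟩
    · rw [← hf, ← hf, h]
    · obtain ⟨v, hv⟩ := hS τ⁻¹ w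
      refine ⟨v, reflection_injective φ z ?_⟩
      rw [hf, hv, MulAut.inv_apply, MulEquiv.apply_symm_apply]
  have hf_heap (a b c : V) : f (a - b + c) = f a - f b + f c := by
    refine reflection_injective φ z ?_
    rw [hf, ← hD.reflection_mul_reflection_mul_reflection, map_mul, map_mul, ← hf, ← hf, ← hf,
      hD.reflection_mul_reflection_mul_reflection]
  obtain ⟨ψ, hψ⟩ := AffineEquiv.exists_coe_eq_of_map_sub_add (n := n) hf_bij hf_heap
  exact ⟨ψ, hD.mulAut_ext fun v => by rw [ofAffine_reflection, hψ, hf]⟩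

variable (φ) in
noncomputable def mulAutEquivAffine (n : ℕ) [Module (ZMod n) V] [N.Characteristic] :
    MulAut G ≃* (V ≃ᵃ[ZMod n] V) :=
  (MulEquiv.ofBijective (hD.ofAffineHom φ (ZMod n))
    ⟨hD.ofAffineHom_injective, fun τ => hD.exists_ofAffine_eq τ⟩).symm

variable (φ) in
include φ in
theorem exists_mulAut_apply_eq_pair (K : Type*) [Field K] [Module K V] {a b c e : G}
    (ha : a ∉ N) (hb : b ∉ N) (hc : c ∉ N) (he : e ∉ N) (hab : a ≠ b) (hce : c ≠ e) :
    ∃ τ : MulAut G, τ a = c ∧ τ b = e := by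
  obtain ⟨va, rfl⟩ := hD.exists_reflection_eq (φ := φ) ha
  obtain ⟨vb, rfl⟩ := hD.exists_reflection_eq (φ := φ) hb
  obtain ⟨vc, rfl⟩ := hD.exists_reflection_eq (φ := φ) hc
  obtain ⟨ve, rfl⟩ := hD.exists_reflection_eq (φ := φ) he
  obtain ⟨ψ, hψa, hψb⟩ :=
    AffineEquiv.exists_apply_eq_pair (K := K) (ne_of_apply_ne _ hab) (ne_of_apply_ne _ hce)
  exact ⟨hD.ofAffine φ ψ, by rw [ofAffine_reflection, hψa],
    by rw [ofAffine_reflection, hψb]⟩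

end IsGeneralizedDihedral

theorem ZMod.eq_zero_of_add_self_eq_zero {p : ℕ} [Fact p.Prime] (hp : p ≠ 2) {M : Type*}
    [AddCommGroup M] [Module (ZMod p) M] {v : M} (h : v + v = 0) : v = 0 := by
  have h2 : (2 : ZMod p) ≠ 0 := Ring.two_ne_zero (by rwa [ZMod.ringChar_zmod_n])
  rw [← two_smul (ZMod p)] at h
  exact (smul_eq_zero.mp h).resolve_left h2

theorem stmt9_general (p d : ℕ) (hp : p.Prime) (hodd : p ≠ 2)
    {G : Type*} [Group G] (N : Subgroup G)
    (hN : Nonempty (↥N ≃* Multiplicative (Fin d → ZMod p)))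
    (z : G) (hz2 : z * z = 1) (hzN : z ∉ N)
    (hinv : ∀ n ∈ N, z * n * z = n⁻¹)
    (hgen : ∀ g : G, g ∈ N ∨ g * z ∈ N) :
    ({g : G | g * g = 1 ∧ g ≠ 1} = {g : G | g ∉ N}) ∧
    Nat.card {g : G | g ∉ N} = p ^ d ∧
    (∀ τ : MulAut G, ∀ s : G, s ∉ N → τ s ∉ N) ∧
    Nonempty (MulAut G ≃* ((Fin d → ZMod p) ≃ᵃ[ZMod p] (Fin d → ZMod p))) ∧
    (∀ a b c e : G, a ∉ N → b ∉ N → c ∉ N → e ∉ N → a ≠ b → c ≠ e →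
      ∃ τ : MulAut G, τ a = c ∧ τ b = e) := by
  obtain ⟨φ⟩ := hN
  have : Fact p.Prime := ⟨hp⟩
  have hD : IsGeneralizedDihedral N z := ⟨hz2, hzN, hinv, hgen⟩
  have hN_noInvolution (n : G) (hn : n ∈ N) (h : n * n = 1) : n = 1 := by
    have : (φ ⟨n, hn⟩).toAdd = 0 := ZMod.eq_zero_of_add_self_eq_zero hodd <| by
      rw [← toAdd_mul, ← map_mul]
      simp [h]
    simpa using this
  have := hD.characteristic hN_noInvolution
  refine ⟨Set.ext fun g => hD.mul_self_eq_one_and_ne_one_iff hN_noInvolution, ?_,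
    fun τ s => (Subgroup.Characteristic.apply_mem_iff τ).not.2,
    ⟨hD.mulAutEquivAffine φ p⟩,
    fun a b c e => hD.exists_mulAut_apply_eq_pair φ (ZMod p)⟩
  rw [hD.card_notMem, Nat.card_congr φ.toEquiv]
  simp

/-- Let `p` be an odd prime, `d ≥ 1`, and `G = (ℤ_p)^d ⋊ ℤ₂`
with the `ℤ₂`-factor (generated by `z`) acting by inversion on `N ≅ (ℤ_p)^d`.
Then the set `S` of all involutions of `G` equals `G \ N`, has size `p^d`,
every automorphism of `G` preserves `S` (so `Aut(G,S) = Aut(G)`),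
`Aut(G) ≅ AGL(d,p)`, and `Aut(G)` acts 2-transitively on `S`. -/
theorem stmt9 (p d : ℕ) (hp : p.Prime) (hodd : p ≠ 2) (hd : 1 ≤ d)
    {G : Type*} [Group G] [Finite G] (N : Subgroup G)
    (hN : Nonempty (↥N ≃* Multiplicative (Fin d → ZMod p)))
    (z : G) (hz2 : z * z = 1) (hzN : z ∉ N)
    (hinv : ∀ n ∈ N, z * n * z = n⁻¹)
    (hgen : ∀ g : G, g ∈ N ∨ g * z ∈ N) :
    ({g : G | g * g = 1 ∧ g ≠ 1} = {g : G | g ∉ N}) ∧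
    Nat.card {g : G | g ∉ N} = p ^ d ∧
    (∀ τ : MulAut G, ∀ s : G, s ∉ N → τ s ∉ N) ∧
    Nonempty (MulAut G ≃* ((Fin d → ZMod p) ≃ᵃ[ZMod p] (Fin d → ZMod p))) ∧
    (∀ a b c e : G, a ∉ N → b ∉ N → c ∉ N → e ∉ N → a ≠ b → c ≠ e →
      ∃ τ : MulAut G, τ a = c ∧ τ b = e) :=
  stmt9_general p d hp hodd N hN z hz2 hzN hinv hgen
end

section
/- Let X be a finite 2-transitive permutation group on a set Ω. Then the socle of X is either a regular elementary abelian p-group for some prime p, or a non-regular non-abelian simple group. -/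
/-- The socle of a group: the subgroup generated by all minimal normal
subgroups. -/
def groupSocle (X : Type*) [Group X] : Subgroup X :=
  sSup {N : Subgroup X | N ≠ ⊥ ∧ N.Normal ∧
    ∀ M : Subgroup X, M.Normal → M ≠ ⊥ → M ≤ N → M = N}

set_option linter.unusedSectionVars false
namespace Burnside
variable {Ω : Type*} [Finite Ω] {X : Subgroup (Equiv.Perm Ω)}

/-- action of an element of `X` on `Ω`. -/
def ap (g : ↥X) (a : Ω) : Ω := (g : Equiv.Perm Ω) a

lemma ap_mul (g h : ↥X) (a : Ω) : ap (g*h) a = ap g (ap h a) := rfl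
lemma ap_one (a : Ω) : ap (1 : ↥X) a = a := rfl
lemma ap_inv_ap (g : ↥X) (a : Ω) : ap g⁻¹ (ap g a) = a := by
  simp [ap]
lemma ap_ap_inv (g : ↥X) (a : Ω) : ap g (ap g⁻¹ a) = a := by
  simp [ap]
lemma eq_one_of_fixes (g : ↥X) (h : ∀ a, ap g a = a) : g = 1 :=
  Subtype.ext (Equiv.ext h)
lemma exists_moved {g : ↥X} (h : g ≠ 1) : ∃ a, ap g a ≠ a := by
  by_contra hc
  push_neg at hc
  exact h (eq_one_of_fixes g hc)
lemma ap_injective (g : ↥X) : Function.Injective (ap g) := by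
  intro a b h
  have := congrArg (ap g⁻¹) h
  rwa [ap_inv_ap, ap_inv_ap] at this

/-- transitivity of a subgroup of `↥X` -/
def Tr (A : Subgroup ↥X) : Prop := ∀ x y : Ω, ∃ a ∈ A, ap a x = y

lemma Tr.mono {A B : Subgroup ↥X} (h : A ≤ B) (hA : Tr A) : Tr B := by
  intro x y
  obtain ⟨a, ha, h'⟩ := hA x y
  exact ⟨a, h ha, h'⟩

/-- orbit of a point under a subgroup -/
def Orb (A : Subgroup ↥X) (x : Ω) : Set Ω := {y | ∃ a ∈ A, ap a x = y}

lemma mem_orb_self (A : Subgroup ↥X) (x : Ω) : x ∈ Orb A x := ⟨1, A.one_mem, rfl⟩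

lemma orb_eq_of_mem {A : Subgroup ↥X} {x y : Ω} (h : y ∈ Orb A x) : Orb A y = Orb A x := by
  obtain ⟨a, ha, rfl⟩ := h
  ext z
  constructor
  · rintro ⟨b, hb, rfl⟩
    exact ⟨b*a, A.mul_mem hb ha, (ap_mul ..)⟩
  · rintro ⟨b, hb, rfl⟩
    refine ⟨b*a⁻¹, A.mul_mem hb (A.inv_mem ha), ?_⟩
    rw [ap_mul, ap_inv_ap]

lemma orb_disjoint {A : Subgroup ↥X} {x y : Ω} (h : y ∉ Orb A x) :
    Disjoint (Orb A x) (Orb A y) := by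
  rw [Set.disjoint_iff_inter_eq_empty]
  by_contra hc
  obtain ⟨z, hz1, hz2⟩ := Set.nonempty_iff_ne_empty.2 hc
  exact h (by rw [← orb_eq_of_mem hz1, orb_eq_of_mem hz2]; exact mem_orb_self A y)

/-- `A` is normalized by all elements of `N`. -/
def NormalIn (N A : Subgroup ↥X) : Prop := ∀ ⦃n⦄, n ∈ N → ∀ ⦃k⦄, k ∈ A → n*k*n⁻¹ ∈ A

lemma NormalIn.conj_mem' {N A : Subgroup ↥X} (h : NormalIn N A) {n : ↥X} (hn : n ∈ N)
    {k : ↥X} (hk : k ∈ A) : n⁻¹*k*n ∈ A := by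
  have := h (N.inv_mem hn) hk
  simpa using this

/-- every nontrivial normal subgroup of a 2-transitive group is transitive -/
lemma normal_transitive
    (ht : ∀ a b c d : Ω, a ≠ b → c ≠ d → ∃ g : ↥X, ap g a = c ∧ ap g b = d)
    {N : Subgroup ↥X} (hnorm : N.Normal) (hne : N ≠ ⊥) : Tr N := by
  have : ∃ n ∈ N, n ≠ (1 : ↥X) := by
    by_contra hc
    push_neg at hc
    exact hne ((Subgroup.eq_bot_iff_forall N).2 hc)
  obtain ⟨n0, hn0, hn0ne⟩ := this
  obtain ⟨x0, hx0⟩ := exists_moved hn0ne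
  intro a b
  rcases eq_or_ne a b with rfl | hab
  · exact ⟨1, N.one_mem, rfl⟩
  · obtain ⟨g, hg1, hg2⟩ := ht x0 (ap n0 x0) a b (Ne.symm hx0) hab
    refine ⟨g * n0 * g⁻¹, hnorm.conj_mem n0 hn0 g, ?_⟩
    rw [ap_mul, ap_mul, ← hg1, ap_inv_ap, hg2]

/-- the centralizer of a normal subgroup is normal -/
lemma centralizer_normal {N : Subgroup ↥X} (hnorm : N.Normal) :
    (Subgroup.centralizer (N : Set ↥X)).Normal := by
  constructor
  intro c hc g
  rw [Subgroup.mem_centralizer_iff] at hc ⊢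
  intro n hn
  have h1 : g⁻¹*n*g ∈ N := by simpa using hnorm.conj_mem n hn g⁻¹
  have h2 := hc _ h1
  calc n * (g*c*g⁻¹) = g * ((g⁻¹*n*g) * c) * g⁻¹ := by group
    _ = g * (c * (g⁻¹*n*g)) * g⁻¹ := by rw [h2]
    _ = (g*c*g⁻¹) * n := by group

lemma commute_of_disjoint {A B : Subgroup ↥X} {N : Subgroup ↥X}
    (hAN : A ≤ N) (hBN : B ≤ N)
    (hA : NormalIn N A) (hB : NormalIn N B) (hdisj : A ⊓ B = ⊥) :
    ∀ a ∈ A, ∀ b ∈ B, a * b = b * a := by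
  intro a ha b hb
  have h1 : a*b*a⁻¹*b⁻¹ ∈ A := by
    have : a * (b*a⁻¹*b⁻¹) ∈ A := A.mul_mem ha (hA (hBN hb) (A.inv_mem ha))
    simpa [mul_assoc] using this
  have h2 : a*b*a⁻¹*b⁻¹ ∈ B := by
    have h' : a*b*a⁻¹ ∈ B := hB (hAN ha) hb
    exact B.mul_mem h' (B.inv_mem hb)
  have : a*b*a⁻¹*b⁻¹ ∈ A ⊓ B := ⟨h1, h2⟩
  rw [hdisj, Subgroup.mem_bot] at this
  have := mul_eq_one_iff_eq_inv.1 this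
  calc a*b = (a*b*a⁻¹*b⁻¹)*(b*a) := by group
    _ = b*a := by rw [this]; group

/-- A transitive semiregular subgroup has the same cardinality as `Ω`. -/
lemma card_eq_of_regular (α : Ω) {A : Subgroup ↥X} (htr : Tr A)
    (hsr : ∀ g ∈ A, ap g α = α → g = 1) : Nat.card ↥A = Nat.card Ω := by
  apply Nat.card_eq_of_bijective (fun a : ↥A => ap a.1 α)
  constructor
  · rintro ⟨a, ha⟩ ⟨b, hb⟩ h
    simp only at h
    have h1 : ap (b⁻¹ * a) α = α := by
      rw [ap_mul, h, ap_inv_ap]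
    have := hsr _ (A.mul_mem (A.inv_mem hb) ha) h1
    have : a = b := by
      have := congrArg (fun z => b * z) this
      simpa [mul_assoc] using this
    exact Subtype.ext this
  · intro y
    obtain ⟨a, ha, h⟩ := htr α y
    exact ⟨⟨a, ha⟩, h⟩

lemma conj_of_regular
    (ht : ∀ a b c d : Ω, a ≠ b → c ≠ d → ∃ g : ↥X, ap g a = c ∧ ap g b = d)
    (α : Ω) {N : Subgroup ↥X} (hnorm : N.Normal)
    (hsr : ∀ g ∈ N, (∃ a, ap g a = a) → g = 1)
    {n n' : ↥X} (hn : n ∈ N) (hnne : n ≠ 1) (hn' : n' ∈ N) (hn'ne : n' ≠ 1) :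
    ∃ g : ↥X, g * n * g⁻¹ = n' := by
  have hmoved : ap n α ≠ α := fun h => hnne (hsr n hn ⟨α, h⟩)
  have hmoved' : ap n' α ≠ α := fun h => hn'ne (hsr n' hn' ⟨α, h⟩)
  obtain ⟨g, hg1, hg2⟩ := ht α (ap n α) α (ap n' α) (Ne.symm hmoved) (Ne.symm hmoved')
  refine ⟨g, ?_⟩
  have hginv : ap g⁻¹ α = α := by conv_lhs => rw [← hg1, ap_inv_ap]
  have e1 : ap (g * n * g⁻¹) α = ap n' α := by
    rw [ap_mul, ap_mul, hginv, hg2]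
  have hfix : ap (n'⁻¹ * (g * n * g⁻¹)) α = α := by
    rw [ap_mul, e1, ap_inv_ap]
  have hmem : n'⁻¹ * (g * n * g⁻¹) ∈ N := N.mul_mem (N.inv_mem hn') (hnorm.conj_mem n hn g)
  have := hsr _ hmem ⟨α, hfix⟩
  have h2 : g * n * g⁻¹ = n' * 1 := by
    rw [← this]; group
  simpa using h2

/-- A regular (transitive + semiregular) normal subgroup of a 2-transitive group is
elementary abelian. -/
lemma reg_elem_abelian
    (ht : ∀ a b c d : Ω, a ≠ b → c ≠ d → ∃ g : ↥X, ap g a = c ∧ ap g b = d)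
    (hab : ∃ a b : Ω, a ≠ b)
    {N : Subgroup ↥X} (hnorm : N.Normal) (hne : N ≠ ⊥) (htr : Tr N)
    (htrmaker : ∀ (M : Subgroup ↥X), M.Normal → M ≠ ⊥ → Tr M)
    (hsr : ∀ g ∈ N, (∃ a, ap g a = a) → g = 1) :
    (∃ p : ℕ, p.Prime ∧ ∀ g ∈ N, g ^ p = 1) ∧ (∀ g ∈ N, ∀ h ∈ N, g * h = h * g) := by
  obtain ⟨α, b0, hab0⟩ := hab
  -- all nontrivial elements conjugate hence same order
  have hconj := fun {n n'} hn hnne hn' hn'ne =>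
    conj_of_regular ht α hnorm hsr (n := n) (n' := n') hn hnne hn' hn'ne
  have horder : ∀ {n n' : ↥X}, n ∈ N → n ≠ 1 → n' ∈ N → n' ≠ 1 → orderOf n = orderOf n' := by
    intro n n' hn hnne hn' hn'ne
    obtain ⟨g, hg⟩ := hconj hn hnne hn' hn'ne
    rw [← hg]
    have : g * n * g⁻¹ = (MulAut.conj g).toMonoidHom n := by simp [MulAut.conj_apply]
    rw [this, orderOf_injective _ (MulAut.conj g).injective]
  obtain ⟨n0, hn0, hn0ne⟩ : ∃ n ∈ N, n ≠ (1:↥X) := by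
    by_contra hc; push_neg at hc
    exact hne ((Subgroup.eq_bot_iff_forall N).2 hc)
  set r := orderOf n0 with hr
  have hrne1 : r ≠ 1 := fun h => hn0ne (orderOf_eq_one_iff.1 h)
  have hrpos : 0 < r := orderOf_pos n0
  set p := r.minFac with hp
  have hpp : p.Prime := Nat.minFac_prime hrne1
  have hpdvd : p ∣ r := Nat.minFac_dvd r
  -- an element of order p
  have hn1 : orderOf (n0 ^ (r / p)) = p := by
    rw [orderOf_pow, ← hr, Nat.gcd_eq_right (Nat.div_dvd_of_dvd hpdvd),
      Nat.div_div_self hpdvd hrpos.ne']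
  have hn1ne : n0 ^ (r / p) ≠ 1 := by
    intro h
    rw [h, orderOf_one] at hn1
    exact hpp.ne_one hn1.symm
  have hn1mem : n0 ^ (r / p) ∈ N := N.pow_mem hn0 _
  have hrp : r = p := by
    have := horder hn0 hn0ne hn1mem hn1ne
    rw [hn1] at this; exact this
  have horderp : ∀ n ∈ N, n ≠ (1:↥X) → orderOf n = p := by
    intro n hn hnne
    rw [horder hn hnne hn0 hn0ne, ← hr, hrp]
  have hpow : ∀ g ∈ N, g ^ p = 1 := by
    intro g hg
    rcases eq_or_ne g 1 with rfl | hgne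
    · simp
    · rw [← horderp g hg hgne]; exact pow_orderOf_eq_one g
  refine ⟨⟨p, hpp, hpow⟩, ?_⟩
  -- p-group, so the center is nontrivial
  haveI : Fact p.Prime := ⟨hpp⟩
  haveI : Nontrivial ↥N := (Subgroup.nontrivial_iff_ne_bot N).2 hne
  have hpgroup : IsPGroup p ↥N := by
    intro x
    refine ⟨1, ?_⟩
    have h1 : ((x : ↥X)) ^ p = 1 := hpow _ x.2
    rw [pow_one]
    exact Subtype.ext (by push_cast; exact h1)
  haveI := hpgroup.center_nontrivial
  obtain ⟨z, hzne⟩ := exists_ne (1 : ↥(Subgroup.center ↥N))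
  set Z : Subgroup ↥X := N ⊓ Subgroup.centralizer (N : Set ↥X) with hZ
  have hcent : (((z : ↥N) : ↥X)) ∈ Subgroup.centralizer (N : Set ↥X) := by
    rw [Subgroup.mem_centralizer_iff]
    intro h hh
    have := Subgroup.mem_center_iff.1 z.2 ⟨h, hh⟩
    have := congrArg (Subgroup.subtype N) this
    simpa using this
  have hzZ : (((z : ↥N) : ↥X)) ∈ Z := ⟨(z : ↥N).2, hcent⟩
  have hzne' : (((z : ↥N) : ↥X)) ≠ 1 := by
    intro h
    exact hzne (Subtype.ext (Subtype.ext (by simpa using h)))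
  have hZne : Z ≠ ⊥ := by
    intro h
    rw [Subgroup.eq_bot_iff_forall] at h
    exact hzne' (h _ hzZ)
  have hZnorm : Z.Normal := by
    constructor
    intro x hx g
    exact ⟨hnorm.conj_mem x hx.1 g, (centralizer_normal hnorm).conj_mem x hx.2 g⟩
  have hZtr : Tr Z := htrmaker Z hZnorm hZne
  -- cardinalities
  have hsrα : ∀ g ∈ N, ap g α = α → g = 1 := fun g hg h => hsr g hg ⟨α, h⟩
  have hcardN : Nat.card ↥N = Nat.card Ω := card_eq_of_regular α htr hsrα
  have hcardZ : Nat.card ↥Z = Nat.card Ω :=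
    card_eq_of_regular α hZtr (fun g hg h => hsrα g hg.1 h)
  have hZN : Z = N := by
    have hle : (Z : Set ↥X) ⊆ (N : Set ↥X) := fun x hx => hx.1
    have hcard : (N : Set ↥X).ncard ≤ (Z : Set ↥X).ncard := by
      rw [← Nat.card_coe_set_eq, ← Nat.card_coe_set_eq]
      simp only [SetLike.coe_sort_coe]
      rw [hcardN, hcardZ]
    exact SetLike.coe_injective (Set.eq_of_subset_of_ncard_le hle hcard)
  intro g hg h hh
  have : g ∈ Subgroup.centralizer (N : Set ↥X) := by
    rw [← hZN] at hg; exact hg.2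
  exact (Subgroup.mem_centralizer_iff.1 this h hh).symm


/-- stabilizer of a point -/
def Stab (α : Ω) : Subgroup ↥X where
  carrier := {g | ap g α = α}
  one_mem' := rfl
  mul_mem' := by
    intro a b ha hb
    show ap (a*b) α = α
    rw [ap_mul, hb, ha]
  inv_mem' := by
    intro a ha
    show ap a⁻¹ α = α
    conv_lhs => rw [← ha, ap_inv_ap]

lemma mem_stab {α : Ω} {g : ↥X} : g ∈ Stab α ↔ ap g α = α := Iff.rfl

lemma stab_conj {α : Ω} {g a : ↥X} (hg : ap g α = α) (ha : a ∈ Stab (X := X) α) :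
    g * a * g⁻¹ ∈ Stab α := by
  have hginv : ap g⁻¹ α = α := by conv_lhs => rw [← hg, ap_inv_ap]
  show ap (g*a*g⁻¹) α = α
  rw [ap_mul, ap_mul, hginv, ha, hg]

/-- all orbits of `N ⊓ Stab α` away from `α` have the same size -/
lemma orb_stab_ncard_eq
    (ht : ∀ a b c d : Ω, a ≠ b → c ≠ d → ∃ g : ↥X, ap g a = c ∧ ap g b = d)
    {N : Subgroup ↥X} (hnorm : N.Normal) {α β γ : Ω} (hβ : β ≠ α) (hγ : γ ≠ α) :
    (Orb (N ⊓ Stab α) β).ncard = (Orb (N ⊓ Stab α) γ).ncard := by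
  obtain ⟨g, hg1, hg2⟩ := ht α β α γ (Ne.symm hβ) (Ne.symm hγ)
  have hginv : ap g⁻¹ α = α := by conv_lhs => rw [← hg1, ap_inv_ap]
  have himg : Orb (N ⊓ Stab α) γ = (ap g) '' (Orb (N ⊓ Stab α) β) := by
    ext z
    constructor
    · rintro ⟨a, ⟨haN, haS⟩, rfl⟩
      refine ⟨ap (g⁻¹ * a * g) β, ⟨g⁻¹ * a * g, ⟨?_, ?_⟩, rfl⟩, ?_⟩
      · simpa using hnorm.conj_mem a haN g⁻¹
      · exact stab_conj hginv haS
      · rw [← ap_mul]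
        have : g * (g⁻¹ * a * g) = a * g := by group
        rw [this, ap_mul, hg2]
    · rintro ⟨y, ⟨a, ⟨haN, haS⟩, rfl⟩, rfl⟩
      refine ⟨g * a * g⁻¹, ⟨hnorm.conj_mem a haN g, stab_conj hg1 haS⟩, ?_⟩
      rw [← hg2, ← ap_mul, ← ap_mul]
      congr 1
      group
  rw [himg, Set.ncard_image_of_injective _ (ap_injective g)]

/-- if all orbits inside an invariant set have size `e`, then `e` divides its size -/
lemma dvd_of_orbits {H : Subgroup ↥X} {e : ℕ} :
    ∀ (n : ℕ) (S : Set Ω), S.ncard = n → (∀ y ∈ S, Orb H y ⊆ S) →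
      (∀ y ∈ S, (Orb H y).ncard = e) → e ∣ n := by
  intro n
  induction n using Nat.strong_induction_on with
  | _ n ih =>
    intro S hcard hinv hsz
    rcases S.eq_empty_or_nonempty with rfl | ⟨y, hy⟩
    · simp only [Set.ncard_empty] at hcard
      exact hcard ▸ dvd_zero e
    · have hOS : Orb H y ⊆ S := hinv y hy
      have hepos : 0 < e := by
        rw [← hsz y hy]
        exact (Set.ncard_pos (Set.toFinite _)).2 ⟨y, mem_orb_self H y⟩
      have hele : e ≤ n := by
        rw [← hsz y hy, ← hcard]
        exact Set.ncard_le_ncard hOS (Set.toFinite S)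
      have hS'card : (S \ Orb H y).ncard = n - e := by
        rw [Set.ncard_diff hOS, hcard, hsz y hy]
      have hinv' : ∀ z ∈ S \ Orb H y, Orb H z ⊆ S \ Orb H y := by
        rintro z ⟨hz1, hz2⟩ w hw
        refine ⟨hinv z hz1 hw, fun hwO => ?_⟩
        have h1 : Orb H w = Orb H z := orb_eq_of_mem hw
        have h2 : Orb H w = Orb H y := orb_eq_of_mem hwO
        exact hz2 (by rw [← h2, h1]; exact mem_orb_self H z)
      have hdvd := ih (n - e) (Nat.sub_lt (lt_of_lt_of_le hepos hele) hepos)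
        (S \ Orb H y) hS'card hinv' (fun z hz => hsz z hz.1)
      have : n = (n - e) + e := (Nat.sub_add_cancel hele).symm
      rw [this]
      exact Nat.dvd_add hdvd dvd_rfl

/-- conjugacy class sizes divide the group order -/
lemma class_ncard_dvd (A : Subgroup ↥X) (a0 : ↥X) :
    ({x : ↥X | ∃ a ∈ A, x = a * a0 * a⁻¹}).ncard ∣ Nat.card ↥A := by
  letI act : MulAction ↥A ↥X := MulAction.compHom _ ((MulAut.conj).comp A.subtype)
  have horb : {x : ↥X | ∃ a ∈ A, x = a * a0 * a⁻¹} = MulAction.orbit ↥A a0 := by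
    ext x
    rw [MulAction.mem_orbit_iff]
    constructor
    · rintro ⟨a, ha, rfl⟩
      exact ⟨⟨a, ha⟩, rfl⟩
    · rintro ⟨⟨a, ha⟩, rfl⟩
      exact ⟨a, ha, rfl⟩
  rw [horb, ← Nat.card_coe_set_eq,
    Nat.card_congr (MulAction.orbitEquivQuotientStabilizer ↥A a0)]
  exact Subgroup.index_dvd_card _



/-- Case I of the simplicity argument: a nontrivial subgroup `A ≤ N` whose
elements commute with a transitive subgroup `R ≤ N` with `A ⊔ R = N` forces
`N` to be regular, hence abelian: contradiction. -/
lemma caseI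
    (ht : ∀ a b c d : Ω, a ≠ b → c ≠ d → ∃ g : ↥X, ap g a = c ∧ ap g b = d)
    (hab : ∃ a b : Ω, a ≠ b)
    {N A R : Subgroup ↥X} (hNnorm : N.Normal)
    (hNnonab : ¬ (∀ g ∈ N, ∀ h ∈ N, g * h = h * g))
    (hAne : A ≠ ⊥) (hAN : A ≤ N) (hRN : R ≤ N)
    (hRnorm : NormalIn N R)
    (hcomm : ∀ a ∈ A, ∀ r ∈ R, a * r = r * a)
    (hsup : A ⊔ R = N) (hRtr : Tr R) : False := by
  obtain ⟨α, b0, hb0⟩ := hab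
  have htrN : Tr N := Tr.mono hRN hRtr
  have hNne : N ≠ ⊥ := by
    intro h
    exact hAne (le_bot_iff.1 (h ▸ hAN))
  -- decomposition N = A * R
  have hdecomp : ∀ x ∈ N, ∃ a ∈ A, ∃ r ∈ R, x = a * r := by
    set P : Subgroup ↥X :=
      { carrier := {x | ∃ a ∈ A, ∃ r ∈ R, x = a * r}
        one_mem' := ⟨1, A.one_mem, 1, R.one_mem, by simp⟩
        mul_mem' := by
          rintro x y ⟨a, ha, r, hr, rfl⟩ ⟨a', ha', r', hr', rfl⟩
          refine ⟨a * a', A.mul_mem ha ha', (a'⁻¹ * r * a') * r',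
            R.mul_mem (hRnorm.conj_mem' (hAN ha') hr) hr', ?_⟩
          group
        inv_mem' := by
          rintro x ⟨a, ha, r, hr, rfl⟩
          refine ⟨a⁻¹, A.inv_mem ha, a * r⁻¹ * a⁻¹, hRnorm (hAN ha) (R.inv_mem hr), ?_⟩
          group } with hP
    intro x hx
    have : N ≤ P := by
      rw [← hsup]
      refine sup_le ?_ ?_
      · intro a ha
        exact ⟨a, ha, 1, R.one_mem, by simp⟩
      · intro r hr
        exact ⟨1, A.one_mem, r, hr, by simp⟩
    exact this hx
  -- A is semiregular
  have hsemiA : ∀ a ∈ A, ∀ x : Ω, ap a x = x → a = 1 := by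
    intro a ha x hx
    apply eq_one_of_fixes
    intro y
    obtain ⟨r, hr, rfl⟩ := hRtr x y
    rw [← ap_mul, hcomm a ha r hr, ap_mul, hx]
  have hinjA : ∀ a ∈ A, ∀ a' ∈ A, ap a α = ap a' α → a = a' := by
    intro a ha a' ha' h
    have h1 : ap (a'⁻¹ * a) α = α := by rw [ap_mul, h, ap_inv_ap]
    have := hsemiA _ (A.mul_mem (A.inv_mem ha') ha) α h1
    have := congrArg (fun z => a' * z) this
    simpa [mul_assoc] using this
  -- the orbit of α under A
  have hΔimg : Orb A α = (fun x : ↥X => ap x α) '' (A : Set ↥X) := by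
    ext y
    constructor
    · rintro ⟨a, ha, rfl⟩; exact ⟨a, ha, rfl⟩
    · rintro ⟨a, ha, rfl⟩; exact ⟨a, ha, rfl⟩
  have hΔcard : (Orb A α).ncard = Nat.card ↥A := by
    rw [hΔimg, Set.ncard_image_of_injOn (fun a ha a' ha' h => hinjA a ha a' ha' h)]
    rw [← Nat.card_coe_set_eq]
    simp
  -- identification of the Nα-orbits inside Δ with conjugacy classes of A
  have hfixr : ∀ a : ↥X, ∀ r : ↥X, ap (a * r) α = α → ap r α = ap a⁻¹ α := by
    intro a r h
    have h2 := congrArg (ap a⁻¹) h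
    rw [← ap_mul, inv_mul_cancel_left] at h2
    exact h2
  have hcalc : ∀ a a' r : ↥X, a * r * a' = a * a' * r → ap r α = ap a⁻¹ α →
      ap (a * r) (ap a' α) = ap (a * a' * a⁻¹) α := by
    intro a a' r h1 hrα
    calc ap (a*r) (ap a' α) = ap (a*r*a') α := (ap_mul (a*r) a' α).symm
      _ = ap (a*a'*r) α := by rw [h1]
      _ = ap (a*a') (ap r α) := ap_mul (a*a') r α
      _ = ap (a*a') (ap a⁻¹ α) := by rw [hrα]
      _ = ap (a*a'*a⁻¹) α := (ap_mul (a*a') a⁻¹ α).symm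
  have horbit : ∀ a' ∈ A, Orb (N ⊓ Stab α) (ap a' α) =
      (fun x : ↥X => ap x α) '' {x : ↥X | ∃ a ∈ A, x = a * a' * a⁻¹} := by
    intro a' ha'
    ext z
    constructor
    · rintro ⟨x, ⟨hxN, hxS⟩, rfl⟩
      obtain ⟨a, ha, r, hr, rfl⟩ := hdecomp x hxN
      refine ⟨a * a' * a⁻¹, ⟨a, ha, rfl⟩, ?_⟩
      have hr' : ap r α = ap a⁻¹ α := hfixr a r hxS
      have h1 : a * r * a' = a * a' * r := by
        rw [mul_assoc, mul_assoc, hcomm a' ha' r hr]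
      show ap (a * a' * a⁻¹) α = ap (a * r) (ap a' α)
      exact (hcalc a a' r h1 hr').symm
    · rintro ⟨x, ⟨a, ha, rfl⟩, rfl⟩
      obtain ⟨r, hr, hrα⟩ := hRtr α (ap a⁻¹ α)
      have hxS : ap (a * r) α = α := by
        rw [ap_mul, hrα, ← ap_mul, mul_inv_cancel]
        rfl
      refine ⟨a * r, ⟨N.mul_mem (hAN ha) (hRN hr), hxS⟩, ?_⟩
      have h1 : a * r * a' = a * a' * r := by
        rw [mul_assoc, mul_assoc, hcomm a' ha' r hr]
      show ap (a * r) (ap a' α) = ap (a * a' * a⁻¹) α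
      exact hcalc a a' r h1 hrα
  -- a fixed nontrivial element of A
  obtain ⟨a0, ha0, ha0ne⟩ : ∃ a ∈ A, a ≠ (1:↥X) := by
    by_contra hc; push_neg at hc
    exact hAne ((Subgroup.eq_bot_iff_forall A).2 hc)
  have hmoves : ∀ a ∈ A, a ≠ (1:↥X) → ap a α ≠ α := by
    intro a ha hane h
    exact hane (hsemiA a ha α h)
  have hβ0 : ap a0 α ≠ α := hmoves a0 ha0 ha0ne
  set e := (Orb (N ⊓ Stab α) (ap a0 α)).ncard with he
  have hsame : ∀ β : Ω, β ≠ α → (Orb (N ⊓ Stab α) β).ncard = e :=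
    fun β hβ => orb_stab_ncard_eq ht hNnorm hβ hβ0
  -- e divides |A|
  have hclassinj : Set.InjOn (fun x : ↥X => ap x α) {x : ↥X | ∃ a ∈ A, x = a * a0 * a⁻¹} := by
    rintro x ⟨a, ha, rfl⟩ y ⟨b, hb, rfl⟩ h
    exact hinjA _ (A.mul_mem (A.mul_mem ha ha0) (A.inv_mem ha))
      _ (A.mul_mem (A.mul_mem hb ha0) (A.inv_mem hb)) h
  have hedvd1 : e ∣ Nat.card ↥A := by
    rw [he, horbit a0 ha0, Set.ncard_image_of_injOn hclassinj]
    exact class_ncard_dvd A a0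
  -- e divides |A| - 1
  have hedvd2 : e ∣ Nat.card ↥A - 1 := by
    apply dvd_of_orbits (Nat.card ↥A - 1) (Orb A α \ {α})
    · rw [Set.ncard_diff_singleton_of_mem (mem_orb_self A α), hΔcard]
    · rintro y ⟨hy1, hy2⟩ w hw
      obtain ⟨a', ha', rfl⟩ := hy1
      have ha'ne : a' ≠ 1 := by
        rintro rfl
        exact hy2 rfl
      rw [horbit a' ha'] at hw
      obtain ⟨x, ⟨a, ha, rfl⟩, rfl⟩ := hw
      have hmem : a * a' * a⁻¹ ∈ A := A.mul_mem (A.mul_mem ha ha') (A.inv_mem ha)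
      have hne1 : a * a' * a⁻¹ ≠ 1 := by
        intro h
        apply ha'ne
        have := congrArg (fun z => a⁻¹ * z * a) h
        simpa [mul_assoc] using this
      exact ⟨⟨_, hmem, rfl⟩, hmoves _ hmem hne1⟩
    · rintro y ⟨hy1, hy2⟩
      exact hsame y hy2
  -- hence e = 1
  have hcardA : 1 ≤ Nat.card ↥A := Nat.one_le_iff_ne_zero.2 (Nat.card_pos).ne'
  have he1 : e = 1 := by
    have h3 := Nat.dvd_sub hedvd1 hedvd2
    have h4 : Nat.card ↥A - (Nat.card ↥A - 1) = 1 := by omega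
    rw [h4] at h3
    exact Nat.dvd_one.1 h3
  -- so N ⊓ Stab α = ⊥, i.e. N is semiregular
  have hNα : ∀ x ∈ N ⊓ Stab α, x = (1:↥X) := by
    intro x hx
    apply eq_one_of_fixes
    intro β
    rcases eq_or_ne β α with rfl | hβ
    · exact hx.2
    · have h5 := hsame β hβ
      rw [he1] at h5
      obtain ⟨w, hw⟩ := Set.ncard_eq_one.1 h5
      have hβw : β ∈ Orb (N ⊓ Stab α) β := mem_orb_self _ β
      have hxw : ap x β ∈ Orb (N ⊓ Stab α) β := ⟨x, hx, rfl⟩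
      rw [hw] at hβw hxw
      rw [Set.mem_singleton_iff] at hβw hxw
      rw [hxw, hβw]
  have hsrN : ∀ g ∈ N, (∃ x, ap g x = x) → g = 1 := by
    rintro g hg ⟨x, hx⟩
    obtain ⟨n', hn', hn'α⟩ := htrN α x
    have h1 : ap (n'⁻¹ * g * n') α = α := by
      rw [ap_mul, ap_mul, hn'α, hx, ← hn'α, ap_inv_ap]
    have h2 := hNα _ ⟨N.mul_mem (N.mul_mem (N.inv_mem hn') hg) hn', h1⟩
    have := congrArg (fun z => n' * z * n'⁻¹) h2
    simpa [mul_assoc] using this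
  have htrmaker : ∀ (M : Subgroup ↥X), M.Normal → M ≠ ⊥ → Tr M :=
    fun M h1 h2 => normal_transitive ht h1 h2
  have := (reg_elem_abelian ht ⟨α, b0, hb0⟩ hNnorm hNne htrN htrmaker hsrN).2
  exact hNnonab this


lemma orb_ncard_eq_of_normalIn {N A : Subgroup ↥X} (htrN : Tr N) (hA : NormalIn N A)
    (x y : Ω) : (Orb A x).ncard = (Orb A y).ncard := by
  obtain ⟨n, hn, hnx⟩ := htrN x y
  have himg : Orb A y = (ap n) '' Orb A x := by
    subst hnx
    ext z
    constructor
    · rintro ⟨a, ha, rfl⟩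
      refine ⟨ap (n⁻¹ * a * n) x, ⟨n⁻¹ * a * n, hA.conj_mem' hn ha, rfl⟩, ?_⟩
      calc ap n (ap (n⁻¹*a*n) x) = ap (n*(n⁻¹*a*n)) x := (ap_mul ..).symm
        _ = ap (a*n) x := by congr 1; group
        _ = ap a (ap n x) := ap_mul ..
    · rintro ⟨w, ⟨a, ha, rfl⟩, rfl⟩
      refine ⟨n*a*n⁻¹, hA hn ha, ?_⟩
      calc ap (n*a*n⁻¹) (ap n x) = ap (n*a*n⁻¹*n) x := (ap_mul ..).symm
        _ = ap (n*a) x := by congr 1; group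
        _ = ap n (ap a x) := ap_mul ..
  rw [himg, Set.ncard_image_of_injective _ (ap_injective n)]

/-- Case II of the simplicity argument: both `Q` and its complementary product `R`
intransitive is impossible by counting. -/
lemma caseII {N Q R : Subgroup ↥X} (htrN : Tr N)
    (hQnorm : NormalIn N Q) (hRnorm : NormalIn N R) {α : Ω}
    (hcov : ∀ β : Ω, β ∈ Orb Q α ∨ β ∈ Orb R α)
    (hQin : ¬ Tr Q) (hRin : ¬ Tr R) : False := by
  have hdouble : ∀ (A : Subgroup ↥X), NormalIn N A → ¬ Tr A →
      2 * (Orb A α).ncard ≤ Nat.card Ω := by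
    intro A hA hAin
    rw [Tr] at hAin
    push_neg at hAin
    obtain ⟨x, y, hxy⟩ := hAin
    have hynotin : y ∉ Orb A x := by
      rintro ⟨a, ha, h⟩
      exact hxy a ha h
    have hdis : Disjoint (Orb A x) (Orb A y) := orb_disjoint hynotin
    have hsum : (Orb A x ∪ Orb A y).ncard = (Orb A x).ncard + (Orb A y).ncard :=
      Set.ncard_union_eq hdis
    have hle : (Orb A x ∪ Orb A y).ncard ≤ Nat.card Ω := by
      rw [← Set.ncard_univ Ω]
      exact Set.ncard_le_ncard (Set.subset_univ _) (Set.toFinite _)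
    have e1 := orb_ncard_eq_of_normalIn htrN hA α x
    have e2 := orb_ncard_eq_of_normalIn htrN hA α y
    omega
  have h2d := hdouble Q hQnorm hQin
  have h2f := hdouble R hRnorm hRin
  have hαR : α ∈ Orb R α := mem_orb_self R α
  have hsub : (Set.univ \ Orb R α) ∪ {α} ⊆ Orb Q α := by
    rintro β (⟨-, hβ⟩ | hβ)
    · rcases hcov β with h | h
      · exact h
      · exact absurd h hβ
    · rw [Set.mem_singleton_iff] at hβ
      rw [hβ]
      exact mem_orb_self Q α
  have hcard1 : ((Set.univ \ Orb R α) ∪ {α}).ncard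
      = (Nat.card Ω - (Orb R α).ncard) + 1 := by
    rw [Set.union_singleton, Set.ncard_insert_of_notMem (by simp [hαR]),
      Set.ncard_diff (Set.subset_univ _), Set.ncard_univ]
  have hge : (Nat.card Ω - (Orb R α).ncard) + 1 ≤ (Orb Q α).ncard := by
    rw [← hcard1]
    exact Set.ncard_le_ncard hsub (Set.toFinite _)
  have hfn : (Orb R α).ncard ≤ Nat.card Ω := by
    rw [← Set.ncard_univ Ω]
    exact Set.ncard_le_ncard (Set.subset_univ _) (Set.toFinite _)
  omega


/-- conjugate of a subgroup -/
def conjS (g : ↥X) (P : Subgroup ↥X) : Subgroup ↥X :=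
  Subgroup.map (MulAut.conj g).toMonoidHom P

lemma mem_conjS {g x : ↥X} {P : Subgroup ↥X} :
    x ∈ conjS g P ↔ ∃ p ∈ P, x = g * p * g⁻¹ := by
  simp only [conjS, Subgroup.mem_map, MulEquiv.coe_toMonoidHom, MulAut.conj_apply]
  constructor
  · rintro ⟨p, hp, rfl⟩; exact ⟨p, hp, rfl⟩
  · rintro ⟨p, hp, rfl⟩; exact ⟨p, hp, rfl⟩

lemma conjS_one (P : Subgroup ↥X) : conjS 1 P = P := by
  ext x
  rw [mem_conjS]
  constructor
  · rintro ⟨p, hp, rfl⟩; simpa using hp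
  · intro hx; exact ⟨x, hx, by simp⟩

lemma conjS_mem_of_mem {g x : ↥X} {P : Subgroup ↥X} (hx : x ∈ P) : g * x * g⁻¹ ∈ conjS g P :=
  mem_conjS.2 ⟨x, hx, rfl⟩

lemma conjS_conj_mem {u g x : ↥X} {P : Subgroup ↥X} (hx : x ∈ conjS g P) :
    u * x * u⁻¹ ∈ conjS (u * g) P := by
  obtain ⟨p, hp, rfl⟩ := mem_conjS.1 hx
  refine mem_conjS.2 ⟨p, hp, ?_⟩
  group

lemma conjS_ne_bot {g : ↥X} {P : Subgroup ↥X} (h : P ≠ ⊥) : conjS g P ≠ ⊥ := by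
  intro hc
  apply h
  rw [Subgroup.eq_bot_iff_forall] at hc ⊢
  intro x hx
  have := hc _ (conjS_mem_of_mem (g := g) hx)
  have h2 := congrArg (fun z => g⁻¹ * z * g) this
  simpa [mul_assoc] using h2

lemma card_conjS (g : ↥X) (P : Subgroup ↥X) : Nat.card ↥(conjS g P) = Nat.card ↥P :=
  (Nat.card_congr (P.equivMapOfInjective _ (MulAut.conj g).injective).toEquiv).symm

lemma conjS_le_N {g : ↥X} {P N : Subgroup ↥X} (hNnorm : N.Normal) (hP : P ≤ N) :
    conjS g P ≤ N := by
  intro x hx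
  obtain ⟨p, hp, rfl⟩ := mem_conjS.1 hx
  exact hNnorm.conj_mem p (hP hp) g

lemma conjS_normalIn {g : ↥X} {P N : Subgroup ↥X} (hNnorm : N.Normal)
    (hP : NormalIn N P) : NormalIn N (conjS g P) := by
  intro n hn x hx
  obtain ⟨p, hp, rfl⟩ := mem_conjS.1 hx
  have h1 : g⁻¹ * n * g ∈ N := by simpa using hNnorm.conj_mem n hn g⁻¹
  have h2 : (g⁻¹*n*g) * p * (g⁻¹*n*g)⁻¹ ∈ P := hP h1 hp
  have h3 := conjS_mem_of_mem (g := g) h2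
  have : g * ((g⁻¹*n*g) * p * (g⁻¹*n*g)⁻¹) * g⁻¹ = n * (g * p * g⁻¹) * n⁻¹ := by
    group
  rwa [this] at h3

lemma subgroup_eq_of_le_of_card_le {A B : Subgroup ↥X} (h : A ≤ B)
    (hc : Nat.card ↥B ≤ Nat.card ↥A) : A = B := by
  apply SetLike.coe_injective
  apply Set.eq_of_subset_of_ncard_le h
  rw [← Nat.card_coe_set_eq, ← Nat.card_coe_set_eq]
  simpa using hc


/-- the set of elements of conjugates of `K0` other than `Q` -/
def SG (K0 Q : Subgroup ↥X) : Set ↥X := {x | ∃ g : ↥X, conjS g K0 ≠ Q ∧ x ∈ conjS g K0}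

/-- the subgroup generated by the conjugates of `K0` other than `Q` -/
def RR (K0 Q : Subgroup ↥X) : Subgroup ↥X := Subgroup.closure (SG K0 Q)

/-- The minimal normal subgroup of a 2-transitive group is simple in the
non-abelian case. -/
lemma N_simple
    (ht : ∀ a b c d : Ω, a ≠ b → c ≠ d → ∃ g : ↥X, ap g a = c ∧ ap g b = d)
    (hab : ∃ a b : Ω, a ≠ b)
    {N : Subgroup ↥X} (hNnorm : N.Normal) (hNne : N ≠ ⊥)
    (hNmin : ∀ M : Subgroup ↥X, M.Normal → M ≠ ⊥ → M ≤ N → M = N)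
    (huniq : ∀ M : Subgroup ↥X, M.Normal → M ≠ ⊥ →
      (∀ M' : Subgroup ↥X, M'.Normal → M' ≠ ⊥ → M' ≤ M → M' = M) → M = N)
    (hNnonab : ¬ (∀ g ∈ N, ∀ h ∈ N, g * h = h * g)) :
    IsSimpleGroup ↥N := by
  haveI : Nontrivial ↥N := (Subgroup.nontrivial_iff_ne_bot N).2 hNne
  constructor
  intro H hHnorm
  by_contra hc
  push_neg at hc
  obtain ⟨hHne, hHnetop⟩ := hc
  -- push H down to a subgroup of ↥X
  set K1 : Subgroup ↥X := Subgroup.map N.subtype H with hK1def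
  have hK1le : K1 ≤ N := Subgroup.map_subtype_le H
  have hK1ne : K1 ≠ ⊥ := by
    obtain ⟨h0, hh0, hh0ne⟩ : ∃ h0 ∈ H, h0 ≠ (1 : ↥N) := by
      by_contra hcc; push_neg at hcc
      exact hHne ((Subgroup.eq_bot_iff_forall H).2 hcc)
    intro hcc
    rw [Subgroup.eq_bot_iff_forall] at hcc
    have : (h0 : ↥X) ∈ K1 := ⟨h0, hh0, rfl⟩
    have := hcc _ this
    exact hh0ne (Subtype.ext (by simpa using this))
  have hK1norm : NormalIn N K1 := by
    rintro n hn k ⟨h0, hh0, rfl⟩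
    refine ⟨⟨n, hn⟩ * h0 * ⟨n, hn⟩⁻¹, hHnorm.conj_mem h0 hh0 ⟨n, hn⟩, rfl⟩
  have hK1netop : K1 ≠ N := by
    intro hcc
    apply hHnetop
    rw [Subgroup.eq_top_iff']
    intro x
    have hxK1 : (x : ↥X) ∈ K1 := by rw [hcc]; exact x.2
    obtain ⟨h0, hh0, hh0x⟩ := Subgroup.mem_map.1 hxK1
    have : h0 = x := Subtype.ext (by simpa using hh0x)
    exact this ▸ hh0
  have hK1cardlt : Nat.card ↥K1 < Nat.card ↥N := by
    have hss : (K1 : Set ↥X) ⊂ (N : Set ↥X) :=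
      ⟨hK1le, fun hcc => hK1netop (le_antisymm hK1le hcc)⟩
    have := Set.ncard_lt_ncard hss (Set.toFinite _)
    rwa [← Nat.card_coe_set_eq, ← Nat.card_coe_set_eq,
      SetLike.coe_sort_coe, SetLike.coe_sort_coe] at this
  -- choose a minimal nontrivial N-normal subgroup K0
  set 𝒮 : Set (Subgroup ↥X) := {K' | K' ≤ N ∧ K' ≠ ⊥ ∧ NormalIn N K'} with h𝒮
  have hK1𝒮 : K1 ∈ 𝒮 := ⟨hK1le, hK1ne, hK1norm⟩
  set cards : Set ℕ := {m | ∃ K' ∈ 𝒮, Nat.card ↥K' = m} with hcards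
  have hcardsne : cards.Nonempty := ⟨_, K1, hK1𝒮, rfl⟩
  obtain ⟨K0, hK0𝒮, hK0card⟩ := Nat.sInf_mem hcardsne
  have hK0min : ∀ K' ∈ 𝒮, Nat.card ↥K0 ≤ Nat.card ↥K' := by
    intro K' hK'
    rw [hK0card]
    exact Nat.sInf_le ⟨K', hK', rfl⟩
  obtain ⟨hK0le, hK0ne, hK0norm⟩ := hK0𝒮
  have hK0netop : K0 ≠ N := by
    intro hcc
    have := hK0min K1 hK1𝒮
    rw [hcc] at this
    omega
  -- conjugates of K0 are in 𝒮 with the same cardinality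
  have hconj𝒮 : ∀ g : ↥X, conjS g K0 ∈ 𝒮 :=
    fun g => ⟨conjS_le_N hNnorm hK0le, conjS_ne_bot hK0ne, conjS_normalIn hNnorm hK0norm⟩
  -- distinct conjugates commute elementwise
  have hpair : ∀ g h : ↥X, conjS g K0 = conjS h K0 ∨
      (∀ x ∈ conjS g K0, ∀ y ∈ conjS h K0, x * y = y * x) := by
    intro g h
    by_cases hd : conjS g K0 ⊓ conjS h K0 = ⊥
    · right
      exact commute_of_disjoint (hconj𝒮 g).1 (hconj𝒮 h).1 (hconj𝒮 g).2.2 (hconj𝒮 h).2.2 hd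
    · left
      have hmem : conjS g K0 ⊓ conjS h K0 ∈ 𝒮 := by
        refine ⟨le_trans inf_le_left (hconj𝒮 g).1, hd, ?_⟩
        intro n hn x hx
        exact ⟨(hconj𝒮 g).2.2 hn hx.1, (hconj𝒮 h).2.2 hn hx.2⟩
      have hcard := hK0min _ hmem
      have hcg : Nat.card ↥(conjS g K0) = Nat.card ↥K0 := card_conjS g K0
      have hch : Nat.card ↥(conjS h K0) = Nat.card ↥K0 := card_conjS h K0
      have e1 : conjS g K0 ⊓ conjS h K0 = conjS g K0 :=
        subgroup_eq_of_le_of_card_le inf_le_left (by omega)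
      have e2 : conjS g K0 ⊓ conjS h K0 = conjS h K0 :=
        subgroup_eq_of_le_of_card_le inf_le_right (by omega)
      rw [← e1, e2]
  -- there are at least two conjugates
  obtain ⟨g1, hg1⟩ : ∃ g1 : ↥X, conjS g1 K0 ≠ K0 := by
    by_contra hcc
    push_neg at hcc
    have hK0normal : K0.Normal := by
      constructor
      intro k hk g
      have : g * k * g⁻¹ ∈ conjS g K0 := conjS_mem_of_mem hk
      rwa [hcc g] at this
    -- then K0 contains a minimal normal subgroup of X, which must be N
    set 𝒯 : Set (Subgroup ↥X) := {L | L.Normal ∧ L ≠ ⊥ ∧ L ≤ K0} with h𝒯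
    have h𝒯ne : K0 ∈ 𝒯 := ⟨hK0normal, hK0ne, le_refl _⟩
    set cards' : Set ℕ := {m | ∃ L ∈ 𝒯, Nat.card ↥L = m} with hcards'
    obtain ⟨L0, hL0𝒯, hL0card⟩ := Nat.sInf_mem (⟨_, K0, h𝒯ne, rfl⟩ : cards'.Nonempty)
    have hL0min : ∀ M : Subgroup ↥X, M.Normal → M ≠ ⊥ → M ≤ L0 → M = L0 := by
      intro M h1 h2 h3
      have hM𝒯 : M ∈ 𝒯 := ⟨h1, h2, le_trans h3 hL0𝒯.2.2⟩
      have : Nat.card ↥L0 ≤ Nat.card ↥M := by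
        rw [hL0card]
        exact Nat.sInf_le ⟨M, hM𝒯, rfl⟩
      exact subgroup_eq_of_le_of_card_le h3 this
    have := huniq L0 hL0𝒯.1 hL0𝒯.2.1 hL0min
    have hNle : N ≤ K0 := this ▸ hL0𝒯.2.2
    exact hK0netop (le_antisymm hK0le hNle)
  -- the subgroup generated by conjugates other than Q
  obtain ⟨α, b0, hb0⟩ := hab
  have hcover : ∀ β : Ω, β ≠ α → ∃ g : ↥X, β ∈ Orb (conjS g K0) α := by
    intro β hβ
    obtain ⟨k0, hk0, hk0ne⟩ : ∃ k ∈ K0, k ≠ (1:↥X) := by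
      by_contra hcc; push_neg at hcc
      exact hK0ne ((Subgroup.eq_bot_iff_forall K0).2 hcc)
    obtain ⟨x0, hx0⟩ := exists_moved hk0ne
    obtain ⟨g, hgx, hgk⟩ := ht x0 (ap k0 x0) α β (Ne.symm hx0) (Ne.symm hβ)
    refine ⟨g, g * k0 * g⁻¹, conjS_mem_of_mem hk0, ?_⟩
    have hginv : ap g⁻¹ α = x0 := by conv_lhs => rw [← hgx, ap_inv_ap]
    rw [ap_mul, ap_mul, hginv, hgk]
  have hRle : ∀ Q, RR K0 Q ≤ N := by
    intro Q
    apply (Subgroup.closure_le N).2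
    rintro x ⟨g, hg, hx⟩
    exact (hconj𝒮 g).1 hx
  have hRnorm : ∀ Q, NormalIn N (RR K0 Q) := by
    intro Q n hn k hk
    induction hk using Subgroup.closure_induction with
    | mem x hx =>
      obtain ⟨g, hg, hxg⟩ := hx
      exact Subgroup.subset_closure ⟨g, hg, (hconj𝒮 g).2.2 hn hxg⟩
    | one => simpa using (RR K0 Q).one_mem
    | mul x y hx hy ihx ihy =>
      have : n*(x*y)*n⁻¹ = (n*x*n⁻¹)*(n*y*n⁻¹) := by group
      rw [this]
      exact (RR K0 Q).mul_mem ihx ihy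
    | inv x hx ihx =>
      have : n*x⁻¹*n⁻¹ = (n*x*n⁻¹)⁻¹ := by group
      rw [this]
      exact (RR K0 Q).inv_mem ihx
  have hcommR : ∀ g0 : ↥X, ∀ a ∈ conjS g0 K0, ∀ r ∈ RR K0 (conjS g0 K0), a * r = r * a := by
    intro g0 a ha r hr
    have : r ∈ Subgroup.centralizer {a} := by
      have hsub : SG K0 (conjS g0 K0) ⊆ (Subgroup.centralizer {a} : Subgroup ↥X) := by
        rintro x ⟨g, hg, hx⟩
        rw [SetLike.mem_coe, Subgroup.mem_centralizer_iff]
        rintro y hy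
        rw [Set.mem_singleton_iff] at hy
        rw [hy]
        rcases hpair g g0 with heq | hcomm
        · exact absurd heq hg
        · exact (hcomm x hx a ha).symm
      exact (Subgroup.closure_le _).2 hsub hr
    exact Subgroup.mem_centralizer_iff.1 this a rfl
  have hsupR : ∀ g0 : ↥X, conjS g0 K0 ⊔ RR K0 (conjS g0 K0) = N := by
    intro g0
    set Q := conjS g0 K0 with hQ
    set J' : Subgroup ↥X := Subgroup.closure {x | ∃ g : ↥X, x ∈ conjS g K0} with hJ'
    have hJ'normal : J'.Normal := by
      constructor
      intro x hx u
      induction hx using Subgroup.closure_induction with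
      | mem y hy =>
        obtain ⟨g, hyg⟩ := hy
        exact Subgroup.subset_closure ⟨u * g, conjS_conj_mem hyg⟩
      | one => simpa using J'.one_mem
      | mul y z hy hz ihy ihz =>
        have : u*(y*z)*u⁻¹ = (u*y*u⁻¹)*(u*z*u⁻¹) := by group
        rw [this]
        exact J'.mul_mem ihy ihz
      | inv y hy ihy =>
        have : u*y⁻¹*u⁻¹ = (u*y*u⁻¹)⁻¹ := by group
        rw [this]
        exact J'.inv_mem ihy
    have hJ'ne : J' ≠ ⊥ := by
      intro hcc
      apply hK0ne
      rw [Subgroup.eq_bot_iff_forall] at hcc ⊢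
      intro x hx
      exact hcc x (Subgroup.subset_closure ⟨1, (conjS_one K0).symm ▸ hx⟩)
    have hJ'le : J' ≤ N := by
      apply (Subgroup.closure_le N).2
      rintro x ⟨g, hx⟩
      exact (hconj𝒮 g).1 hx
    have hJ'N : J' = N := hNmin J' hJ'normal hJ'ne hJ'le
    apply le_antisymm
    · apply sup_le
      · rw [← hJ'N]
        intro x hx
        exact Subgroup.subset_closure ⟨g0, hx⟩
      · rw [← hJ'N]
        apply Subgroup.closure_mono
        rintro x ⟨g, _, hx⟩
        exact ⟨g, hx⟩
    · rw [← hJ'N]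
      apply (Subgroup.closure_le _).2
      rintro x ⟨g, hx⟩
      by_cases hgQ : conjS g K0 = Q
      · exact SetLike.le_def.1 le_sup_left (hgQ ▸ hx)
      · refine SetLike.le_def.1 le_sup_right (Subgroup.subset_closure ?_)
        exact ⟨g, hgQ, hx⟩
  -- now the case split
  by_cases hKtr : Tr K0
  · -- some conjugate other than Q := conjS g1 K0 is K0 itself, which is transitive
    have hK0le' : K0 ≤ RR K0 (conjS g1 K0) := by
      intro x hx
      refine Subgroup.subset_closure ?_
      refine ⟨1, ?_, ?_⟩
      · rw [conjS_one]; exact Ne.symm hg1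
      · rw [conjS_one]; exact hx
    exact caseI ht ⟨α, b0, hb0⟩ hNnorm hNnonab (conjS_ne_bot hK0ne)
      (hconj𝒮 g1).1 (hRle _) (hRnorm _) (hcommR g1) (hsupR g1) (Tr.mono hK0le' hKtr)
  · by_cases hRtr : Tr (RR K0 K0)
    · have h1 : conjS (1:↥X) K0 = K0 := conjS_one K0
      refine caseI ht ⟨α, b0, hb0⟩ hNnorm hNnonab hK0ne hK0le (hRle K0) (hRnorm K0)
        ?_ ?_ hRtr
      · intro a ha r hr
        have := hcommR 1 a (by rw [h1]; exact ha) r (by rw [h1]; exact hr)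
        exact this
      · have := hsupR 1
        rw [h1] at this
        exact this
    · -- both K0 and RR K0 intransitive : counting contradiction
      have htrN : Tr N := normal_transitive ht hNnorm hNne
      refine caseII htrN hK0norm (hRnorm K0) (α := α) ?_ hKtr hRtr
      intro β
      rcases eq_or_ne β α with rfl | hβ
      · exact Or.inl (mem_orb_self K0 β)
      · obtain ⟨g, u, hu, huβ⟩ := hcover β hβ
        by_cases hgK : conjS g K0 = K0
        · exact Or.inl ⟨u, hgK ▸ hu, huβ⟩
        · exact Or.inr ⟨u, Subgroup.subset_closure ⟨g, hgK, hu⟩, huβ⟩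


/-- the minimal-normal-subgroup predicate matching the socle definition -/
def MN (N : Subgroup ↥X) : Prop :=
  N ≠ ⊥ ∧ N.Normal ∧ ∀ M : Subgroup ↥X, M.Normal → M ≠ ⊥ → M ≤ N → M = N

lemma exists_MN (hX : Nontrivial ↥X) : ∃ N : Subgroup ↥X, MN N := by
  set cards : Set ℕ := {m | ∃ L : Subgroup ↥X, (L.Normal ∧ L ≠ ⊥) ∧ Nat.card ↥L = m}
    with hcards
  have htopne : (⊤ : Subgroup ↥X) ≠ ⊥ := by
    intro h
    obtain ⟨x, y, hxy⟩ := hX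
    apply hxy
    have hx := (Subgroup.eq_bot_iff_forall _).1 h x (by trivial)
    have hy := (Subgroup.eq_bot_iff_forall _).1 h y (by trivial)
    rw [hx, hy]
  have hne : cards.Nonempty := ⟨_, ⊤, ⟨inferInstance, htopne⟩, rfl⟩
  obtain ⟨N, ⟨hNnorm, hNne⟩, hNcard⟩ := Nat.sInf_mem hne
  refine ⟨N, hNne, hNnorm, ?_⟩
  intro M h1 h2 h3
  have : Nat.card ↥N ≤ Nat.card ↥M := by
    rw [hNcard]
    exact Nat.sInf_le ⟨M, ⟨h1, h2⟩, rfl⟩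
  exact subgroup_eq_of_le_of_card_le h3 this

lemma socle_eq {N : Subgroup ↥X}
    (hN : N ≠ ⊥ ∧ N.Normal ∧ ∀ M : Subgroup ↥X, M.Normal → M ≠ ⊥ → M ≤ N → M = N)
    (huniq : ∀ M : Subgroup ↥X,
      (M ≠ ⊥ ∧ M.Normal ∧ ∀ M' : Subgroup ↥X, M'.Normal → M' ≠ ⊥ → M' ≤ M → M' = M) →
      M = N) :
    groupSocle ↥X = N := by
  unfold groupSocle
  have h : {M : Subgroup ↥X | M ≠ ⊥ ∧ M.Normal ∧
      ∀ M' : Subgroup ↥X, M'.Normal → M' ≠ ⊥ → M' ≤ M → M' = M} = {N} :=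
    Set.eq_singleton_iff_unique_mem.2 ⟨hN, huniq⟩
  rw [h, sSup_singleton]

lemma inf_normal {A B : Subgroup ↥X} (hA : A.Normal) (hB : B.Normal) : (A ⊓ B).Normal := by
  constructor
  intro x hx g
  exact ⟨hA.conj_mem x hx.1 g, hB.conj_mem x hx.2 g⟩

lemma normalIn_top_of_normal {A : Subgroup ↥X} (hA : A.Normal) : NormalIn ⊤ A :=
  fun n _ k hk => hA.conj_mem k hk n

/-- distinct minimal normal subgroups commute elementwise -/
lemma mn_commute {M N : Subgroup ↥X} (hM : MN M) (hN : MN N) (hMN : M ≠ N) :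
    ∀ m ∈ M, ∀ n ∈ N, m * n = n * m := by
  have hW : M ⊓ N = ⊥ := by
    by_contra hW
    have h1 : M ⊓ N = M := hM.2.2 _ (inf_normal hM.2.1 hN.2.1) hW inf_le_left
    have h2 : M ⊓ N = N := hN.2.2 _ (inf_normal hM.2.1 hN.2.1) hW inf_le_right
    exact hMN (h1 ▸ h2)
  exact commute_of_disjoint le_top le_top (normalIn_top_of_normal hM.2.1)
    (normalIn_top_of_normal hN.2.1) hW

/-- Case A: if some minimal normal subgroup is abelian, it is the unique one. -/
lemma caseA_uniq
    (ht : ∀ a b c d : Ω, a ≠ b → c ≠ d → ∃ g : ↥X, ap g a = c ∧ ap g b = d)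
    (α : Ω) {N : Subgroup ↥X} (hN : MN N)
    (habel : ∀ g ∈ N, ∀ h ∈ N, g * h = h * g) :
    ∀ M : Subgroup ↥X, MN M → M = N := by
  intro M hM
  rcases eq_or_ne M N with h | hMN
  · exact h
  · have hcomm := mn_commute hM hN hMN
    have htrN : Tr N := normal_transitive ht hN.2.1 hN.1
    -- every element of M lies in N
    have hle : M ≤ N := by
      intro m hm
      obtain ⟨n, hn, hnα⟩ := htrN α (ap m α)
      have hxcomm : ∀ n' ∈ N, (n⁻¹ * m) * n' = n' * (n⁻¹ * m) := by
        intro n' hn'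
        have c1 : m * n' = n' * m := hcomm m hm n' hn'
        have c2 : n * n' = n' * n := habel n hn n' hn'
        have c2' : n⁻¹ * n' = n' * n⁻¹ := by
          have h2 : n' * n⁻¹ = n⁻¹ * n' := by
            have := congrArg (fun z => n⁻¹ * z * n⁻¹) c2
            simpa [mul_assoc] using this
          exact h2.symm
        calc (n⁻¹ * m) * n' = n⁻¹ * (m * n') := by rw [mul_assoc]
          _ = n⁻¹ * n' * m := by rw [c1, mul_assoc]
          _ = n' * n⁻¹ * m := by rw [c2']
          _ = n' * (n⁻¹ * m) := by rw [mul_assoc]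
      have hfix : ap (n⁻¹ * m) α = α := by
        rw [ap_mul, ← hnα, ap_inv_ap]
      have hone : n⁻¹ * m = 1 := by
        apply eq_one_of_fixes
        intro y
        obtain ⟨n'', hn'', rfl⟩ := htrN α y
        rw [← ap_mul, hxcomm n'' hn'', ap_mul, hfix]
      have : m = n := by
        have := congrArg (fun z => n * z) hone
        simpa using this
      exact this ▸ hn
    exact hN.2.2 M hM.2.1 hM.1 hle

/-- Case B: all minimal normal subgroups nonabelian; then the centralizer of `N`
is trivial and `N` is the unique minimal normal subgroup. -/
lemma caseB_centralizer_bot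
    (ht : ∀ a b c d : Ω, a ≠ b → c ≠ d → ∃ g : ↥X, ap g a = c ∧ ap g b = d)
    (hab : ∃ a b : Ω, a ≠ b)
    {N : Subgroup ↥X} (hN : MN N)
    (hnonab : ¬ (∀ g ∈ N, ∀ h ∈ N, g * h = h * g)) :
    Subgroup.centralizer (N : Set ↥X) = ⊥ := by
  by_contra hC
  have hCnorm : (Subgroup.centralizer (N : Set ↥X)).Normal := centralizer_normal hN.2.1
  have hCtr : Tr (Subgroup.centralizer (N : Set ↥X)) := normal_transitive ht hCnorm hC
  have htrN : Tr N := normal_transitive ht hN.2.1 hN.1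
  have hsr : ∀ g ∈ N, (∃ x, ap g x = x) → g = 1 := by
    rintro g hg ⟨β, hβ⟩
    apply eq_one_of_fixes
    intro y
    obtain ⟨c, hc, rfl⟩ := hCtr β y
    have hcg : g * c = c * g := (Subgroup.mem_centralizer_iff.1 hc g hg)
    rw [← ap_mul, hcg, ap_mul, hβ]
  exact hnonab (reg_elem_abelian ht hab hN.2.1 hN.1 htrN
    (fun M h1 h2 => normal_transitive ht h1 h2) hsr).2

lemma caseB_uniq
    (ht : ∀ a b c d : Ω, a ≠ b → c ≠ d → ∃ g : ↥X, ap g a = c ∧ ap g b = d)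
    (hab : ∃ a b : Ω, a ≠ b)
    {N : Subgroup ↥X} (hN : MN N)
    (hnonab : ¬ (∀ g ∈ N, ∀ h ∈ N, g * h = h * g)) :
    ∀ M : Subgroup ↥X, MN M → M = N := by
  intro M hM
  rcases eq_or_ne M N with h | hMN
  · exact h
  · exfalso
    have hcomm := mn_commute hM hN hMN
    have hle : M ≤ Subgroup.centralizer (N : Set ↥X) := by
      intro m hm
      rw [Subgroup.mem_centralizer_iff]
      intro n hn
      exact (hcomm m hm n hn).symm
    rw [caseB_centralizer_bot ht hab hN hnonab] at hle
    exact hM.1 (le_bot_iff.1 hle)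

end Burnside

open Burnside

/-- Burnside. The socle of a finite 2-transitive permutation
group `X ≤ Sym(Ω)` is either a regular elementary abelian `p`-group, or a
non-regular non-abelian simple group. -/
theorem stmt12 {Ω : Type*} [Finite Ω] (X : Subgroup (Equiv.Perm Ω))
    (h2t : ∀ a b c d : Ω, a ≠ b → c ≠ d → ∃ g ∈ X, g a = c ∧ g b = d) :
    -- regular elementary abelian p-group
    ((∃ p : ℕ, p.Prime ∧ (∀ g ∈ groupSocle ↥X, g ^ p = 1)) ∧
     (∀ g ∈ groupSocle ↥X, ∀ h ∈ groupSocle ↥X, g * h = h * g) ∧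
     (∀ a b : Ω, ∃ g ∈ groupSocle ↥X, (g : Equiv.Perm Ω) a = b) ∧
     (∀ g ∈ groupSocle ↥X, (∃ a : Ω, (g : Equiv.Perm Ω) a = a) → g = 1)) ∨
    -- non-regular non-abelian simple group
    (IsSimpleGroup ↥(groupSocle ↥X) ∧
     (∃ g ∈ groupSocle ↥X, ∃ h ∈ groupSocle ↥X, g * h ≠ h * g) ∧
     ¬((∀ a b : Ω, ∃ g ∈ groupSocle ↥X, (g : Equiv.Perm Ω) a = b) ∧
       (∀ g ∈ groupSocle ↥X, (∃ a : Ω, (g : Equiv.Perm Ω) a = a) → g = 1))) := by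
  classical
  by_cases hab : ∃ a b : Ω, a ≠ b
  · have ht : ∀ a b c d : Ω, a ≠ b → c ≠ d → ∃ g : ↥X, ap g a = c ∧ ap g b = d := by
      intro a b c d h1 h2
      obtain ⟨g, hg, e1, e2⟩ := h2t a b c d h1 h2
      exact ⟨⟨g, hg⟩, e1, e2⟩
    have hX : Nontrivial ↥X := by
      obtain ⟨a, b, hab'⟩ := hab
      obtain ⟨g, hg1, hg2⟩ := ht a b b a hab' (Ne.symm hab')
      refine ⟨g, 1, fun h => hab' ?_⟩
      rw [h] at hg1
      calc a = ap (1 : ↥X) a := rfl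
        _ = b := hg1
    obtain ⟨N0, hMN0⟩ := exists_MN hX
    by_cases habel : ∃ N : Subgroup ↥X, MN N ∧ (∀ g ∈ N, ∀ h ∈ N, g * h = h * g)
    · obtain ⟨N, hMN, habN⟩ := habel
      obtain ⟨α, b0, hb0⟩ := hab
      have hs : groupSocle ↥X = N := socle_eq hMN (caseA_uniq ht α hMN habN)
      left
      rw [hs]
      have htrN : Tr N := normal_transitive ht hMN.2.1 hMN.1
      have hfree : ∀ g ∈ N, (∃ a : Ω, (g : Equiv.Perm Ω) a = a) → g = 1 := by
        rintro g hg ⟨a, ha⟩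
        have ha' : ap g a = a := ha
        apply eq_one_of_fixes
        intro y
        obtain ⟨n, hn, rfl⟩ := htrN a y
        rw [← ap_mul, habN g hg n hn, ap_mul, ha']
      have hsr : ∀ g ∈ N, (∃ x, ap g x = x) → g = 1 := hfree
      refine ⟨(reg_elem_abelian ht ⟨α, b0, hb0⟩ hMN.2.1 hMN.1 htrN
        (fun M h1 h2 => normal_transitive ht h1 h2) hsr).1, habN, ?_, hfree⟩
      intro a b
      obtain ⟨n, hn, h⟩ := htrN a b
      exact ⟨n, hn, h⟩
    · push_neg at habel
      have hnonabE := habel N0 hMN0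
      have hnonab : ¬ (∀ g ∈ N0, ∀ h ∈ N0, g * h = h * g) := by
        intro hall
        obtain ⟨g, hg, h, hh, hne⟩ := hnonabE
        exact hne (hall g hg h hh)
      have huniq := caseB_uniq ht hab hMN0 hnonab
      have hs : groupSocle ↥X = N0 := socle_eq hMN0 huniq
      right
      rw [hs]
      have htrN : Tr N0 := normal_transitive ht hMN0.2.1 hMN0.1
      refine ⟨?_, ?_, ?_⟩
      · exact N_simple ht hab hMN0.2.1 hMN0.1 hMN0.2.2
          (fun M h1 h2 h3 => huniq M ⟨h2, h1, h3⟩) hnonab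
      · exact hnonabE
      · rintro ⟨htr', hfree⟩
        have hsr : ∀ g ∈ N0, (∃ x, ap g x = x) → g = 1 := hfree
        exact hnonab (reg_elem_abelian ht hab hMN0.2.1 hMN0.1 htrN
          (fun M h1 h2 => normal_transitive ht h1 h2) hsr).2
  · push_neg at hab
    left
    have hone : ∀ g : ↥X, g = 1 := by
      intro g
      apply Subtype.ext
      apply Equiv.ext
      intro a
      exact hab _ _
    refine ⟨⟨2, Nat.prime_two, ?_⟩, ?_, ?_, ?_⟩
    · intro g hg
      rw [hone g]
      simp
    · intro g hg h hh
      rw [hone g, hone h]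
    · intro a b
      refine ⟨1, (groupSocle ↥X).one_mem, ?_⟩
      show ((1 : ↥X) : Equiv.Perm Ω) a = b
      rw [OneMemClass.coe_one]
      exact hab _ _
    · intro g hg _
      exact hone g
end

section
/- Let G be a finite nonabelian characteristically simple group (G ≅ T^k for a nonabelian simple group T), embedded in Sym(G) as a transitive subgroup with G subnormal in X ≤ Sym(G). Then either G is normal in X, or there exists a subgroup N with G ⊲ N ⊲ X; i.e., the subnormal defect of G in X is at most 2. -/
/-!
Write `G = S₁ ⋯ Sₖ` as the product of its simple factors, which are perfect and subnormal in `X`.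
Wielandt's argument shows that two perfect simple subnormal subgroups of `X` either coincide or
commute: a perfect subnormal `K` meeting a normal subgroup `N` trivially centralizes it, since
`⁅K, N⁆` lies in the next term of the chain and the three subgroups lemma then gives
`⁅⁅K, K⁆, N⁆ = ⊥`. Every `X`-conjugate of every `Sᵢ` is again such a subgroup, hence normalizes
each `Sⱼ`, hence normalizes `G`. So `G` is normal in its normal closure `N` in `X`, and `N ⊴ X`.
-/

theorem IsSimpleGroup.commutator_eq_top {T : Type*} [Group T] [IsSimpleGroup T]
    (h : ∃ a b : T, a * b ≠ b * a) : commutator T = ⊤ := by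
  refine (Subgroup.commutator_normal (⊤ : Subgroup T) ⊤).eq_bot_or_eq_top.resolve_left
    fun hbot => ?_
  obtain ⟨a, b, hab⟩ := h
  exact hab (((commutator_eq_bot_iff T).mp hbot).is_comm.comm a b)

namespace Subgroup

variable {P : Type*} [Group P]
variable {H K L N : Subgroup P}

/-- Unlike `Subgroup.IsSubnormal`, this is relative to a subgroup `L` rather than the ambient group,
and the chain is built from the top, so that induction peels off its last step `K ⊴ L`. -/
inductive IsSubnormalIn : Subgroup P → Subgroup P → Prop
  | refl (H : Subgroup P) : IsSubnormalIn H H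
  | step {H K L : Subgroup P} : IsSubnormalIn H K → K ≤ L → L ≤ normalizer K → IsSubnormalIn H L

theorem eq_bot_or_eq_of_le_normalizer [IsSimpleGroup K] (hHK : H ≤ K) (hKH : K ≤ normalizer H) :
    H = ⊥ ∨ H = K := by
  rcases ((normal_subgroupOf_iff_le_normalizer hHK).mpr hKH).eq_bot_or_eq_top with h | h
  · exact Or.inl ((subgroupOf_eq_bot.mp h).eq_bot_of_le hHK)
  · exact Or.inr (hHK.antisymm (subgroupOf_eq_top.mp h))

namespace IsSubnormalIn

theorem le (h : IsSubnormalIn H K) : H ≤ K := by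
  induction h with
  | refl => exact le_rfl
  | step _ hKL _ ih => exact ih.trans hKL

theorem of_le_normalizer (hHK : H ≤ K) (hKH : K ≤ normalizer H) : IsSubnormalIn H K :=
  step (refl H) hHK hKH

theorem trans (hHK : IsSubnormalIn H K) (hKL : IsSubnormalIn K L) : IsSubnormalIn H L := by
  induction hKL with
  | refl => exact hHK
  | step _ hML hLM ih => exact step ih hML hLM

theorem of_chain (c : ℕ → Subgroup P) (r : ℕ)
    (hc : ∀ i < r, c i ≤ c (i + 1) ∧ c (i + 1) ≤ normalizer (c i)) :
    IsSubnormalIn (c 0) (c r) := by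
  induction r with
  | zero => exact refl _
  | succ r ih =>
    obtain ⟨hle, hnorm⟩ := hc r r.lt_succ_self
    exact step (ih fun i hi => hc i (hi.trans r.lt_succ_self)) hle hnorm

theorem map {Q : Type*} [Group Q] (f : P →* Q) (h : IsSubnormalIn H K) :
    IsSubnormalIn (H.map f) (K.map f) := by
  induction h with
  | refl => exact refl _
  | step _ hKL hLK ih =>
    exact step ih (map_mono hKL) ((map_mono hLK).trans (le_normalizer_map f))

theorem inf_of_le_normalizer (h : IsSubnormalIn H L) (hKL : K ≤ L) (hLK : L ≤ normalizer K) :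
    IsSubnormalIn (H ⊓ K) K := by
  induction h generalizing K with
  | refl => rw [inf_of_le_right hKL]; exact refl K
  | @step M L hHM hML hLM ih =>
    have hKM : IsSubnormalIn (H ⊓ (K ⊓ M)) (K ⊓ M) :=
      ih inf_le_right
        ((le_inf (hML.trans hLK) le_normalizer).trans inf_normalizer_le_normalizer_inf)
    rw [← inf_assoc, inf_right_comm, inf_of_le_left hHM.le] at hKM
    exact step hKM inf_le_left
      ((le_inf le_normalizer (hKL.trans hLM)).trans inf_normalizer_le_normalizer_inf)

theorem eq_bot_or_eq [hK : IsSimpleGroup K] (h : IsSubnormalIn H K) : H = ⊥ ∨ H = K := by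
  induction h generalizing hK with
  | refl => exact Or.inr rfl
  | @step M K hHM hMK hKM ih =>
    rcases eq_bot_or_eq_of_le_normalizer hMK hKM with rfl | rfl
    · exact Or.inl (le_bot_iff.mp hHM.le)
    · exact ih

theorem commutator_eq_bot_of_disjoint (hK : ⁅K, K⁆ = K) (h : IsSubnormalIn K L) (hNL : N ≤ L)
    (hLN : L ≤ normalizer N) (hKN : Disjoint K N) : ⁅K, N⁆ = ⊥ := by
  induction h generalizing N with
  | refl => rw [hKN.eq_bot_of_ge hNL, commutator_bot_right]
  | @step M L hKM hML hLM ih =>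
    have hM : M ≤ normalizer (N ⊓ M) :=
      (le_inf (hML.trans hLN) le_normalizer).trans inf_normalizer_le_normalizer_inf
    have hKNM : ⁅K, N ⊓ M⁆ = ⊥ := ih inf_le_right hM (hKN.mono_right inf_le_left)
    have hKN_le : ⁅K, N⁆ ≤ N ⊓ M :=
      le_inf (le_normalizer_iff_commutator_le_right.mp (hKM.le.trans (hML.trans hLN)))
        ((commutator_mono hKM.le hNL).trans (le_normalizer_iff_commutator_le_left.mp hLM))
    have h₁ : ⁅⁅K, N⁆, K⁆ = ⊥ :=
      le_bot_iff.mp ((commutator_mono hKN_le le_rfl).trans (by rw [commutator_comm, hKNM]))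
    have h₂ : ⁅⁅N, K⁆, K⁆ = ⊥ := by rwa [commutator_comm N K]
    rw [← hK]
    exact commutator_commutator_eq_bot_of_rotate h₁ h₂

theorem le_or_commutator_eq_bot [IsSimpleGroup K] (hK : ⁅K, K⁆ = K) (h : IsSubnormalIn K L)
    (hNL : N ≤ L) (hLN : L ≤ normalizer N) : K ≤ N ∨ ⁅K, N⁆ = ⊥ := by
  have hKN : K ≤ normalizer (K ⊓ N) :=
    (le_inf le_normalizer (h.le.trans hLN)).trans inf_normalizer_le_normalizer_inf
  rcases eq_bot_or_eq_of_le_normalizer inf_le_left hKN with h' | h'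
  · exact Or.inr (h.commutator_eq_bot_of_disjoint hK hNL hLN (disjoint_iff.mpr h'))
  · exact Or.inl (inf_eq_left.mp h')

theorem eq_or_commutator_eq_bot [IsSimpleGroup K] [IsSimpleGroup H] (hH : ⁅H, H⁆ = H)
    (hK : IsSubnormalIn K L) (hHL : IsSubnormalIn H L) : K = H ∨ ⁅K, H⁆ = ⊥ := by
  induction hK with
  | refl =>
    rcases hHL.eq_bot_or_eq with h | h
    · exact absurd h ((nontrivial_iff_ne_bot H).mp inferInstance)
    · exact Or.inl h.symm
  | step hKM hML hLM ih =>
    rcases hHL.le_or_commutator_eq_bot hH hML hLM with h | h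
    · exact ih (by simpa [inf_of_le_left h] using hHL.inf_of_le_normalizer hML hLM)
    · exact Or.inr (le_bot_iff.mp
        ((commutator_mono hKM.le le_rfl).trans (by rw [commutator_comm, h])))

end IsSubnormalIn

theorem le_normalizer_of_isSubnormalIn [IsSimpleGroup K] [IsSimpleGroup H] (hH : ⁅H, H⁆ = H)
    (hK : IsSubnormalIn K L) (hHL : IsSubnormalIn H L) : K ≤ normalizer H := by
  rcases hK.eq_or_commutator_eq_bot hH hHL with rfl | h
  · exact le_normalizer
  · exact (commutator_eq_bot_iff_le_centralizer.mp h).trans (centralizer_le_normalizer _)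

theorem map_conj_le_normalizer_of_iSup_eq {ι : Type*} {G X : Subgroup P} (S : ι → Subgroup P)
    [∀ i, IsSimpleGroup (S i)] (hS : ∀ i, ⁅S i, S i⁆ = S i) (hSX : ∀ i, IsSubnormalIn (S i) X)
    (hG : ⨆ i, S i = G) {x : P} (hx : x ∈ X) :
    G.map (MulAut.conj x) ≤ normalizer (G : Set P) := by
  rw [← hG, map_iSup]
  refine iSup_le fun i => le_trans (le_iInf fun j => ?_) (iInf_normalizer_le_normalizer_iSup S)
  have : IsSimpleGroup ((S i).map (MulAut.conj x : P →* P)) :=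
    ((S i).equivMapOfInjective _ (MulAut.conj x).injective).symm.isSimpleGroup
  have hX : X.map (MulAut.conj x) = X := mem_normalizer_iff_map_conj_eq.mp (le_normalizer hx)
  exact le_normalizer_of_isSubnormalIn (hS j) (hX ▸ (hSX i).map _) (hSX j)

theorem le_normalizer_iSup_map_conj (H X : Subgroup P) :
    X ≤ normalizer (⨆ x : X, H.map (MulAut.conj (x : P)) : Subgroup P) := by
  intro y hy
  rw [mem_normalizer_iff_map_conj_eq, map_iSup]
  simp_rw [map_map]
  exact (Equiv.mulLeft (⟨y, hy⟩ : X)).iSup_congr fun x => by simp; rfl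

theorem exists_le_normalizer_of_iSup_eq {ι : Type*} {G X : Subgroup P} (S : ι → Subgroup P)
    [∀ i, IsSimpleGroup (S i)] (hS : ∀ i, ⁅S i, S i⁆ = S i) (hSX : ∀ i, IsSubnormalIn (S i) X)
    (hG : ⨆ i, S i = G) :
    ∃ N : Subgroup P, G ≤ N ∧ N ≤ X ∧ N ≤ normalizer (G : Set P) ∧ X ≤ normalizer (N : Set P) := by
  have hGX : G ≤ X := hG ▸ iSup_le fun i => (hSX i).le
  let N : Subgroup P := ⨆ x : X, G.map (MulAut.conj (x : P))
  have hGN : G ≤ N := le_iSup_of_le (1 : X) (mem_normalizer_iff_map_conj_eq.mp (one_mem _)).ge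
  have hNX : N ≤ X := iSup_le fun x =>
    (map_mono hGX).trans (mem_normalizer_iff_map_conj_eq.mp (le_normalizer x.2)).le
  have hNG : N ≤ normalizer (G : Set P) :=
    iSup_le fun x => map_conj_le_normalizer_of_iSup_eq S hS hSX hG x.2
  exact ⟨N, hGN, hNX, hNG, le_normalizer_iSup_map_conj G X⟩

section Pi

variable {ι : Type*} {f : ι → Type*} [∀ i, Group (f i)] [DecidableEq ι]

theorem iSup_range_mulSingle [Finite ι] : ⨆ i, (MonoidHom.mulSingle f i).range = ⊤ :=
  top_le_iff.mp <| (pi_top Set.univ).ge.trans <| pi_le_iff.mpr fun i =>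
    (MonoidHom.range_eq_map _).ge.trans (le_iSup (fun i => (MonoidHom.mulSingle f i).range) i)

theorem normal_range_mulSingle (i : ι) : (MonoidHom.mulSingle f i).range.Normal where
  conj_mem := by
    rintro _ ⟨t, rfl⟩ u
    refine ⟨u i * t * (u i)⁻¹, funext fun j => ?_⟩
    by_cases h : j = i
    · subst h; simp
    · simp [Pi.mulSingle_eq_of_ne h]

theorem exists_le_normalizer_of_isSubnormalIn_range [Finite ι] [∀ i, IsSimpleGroup (f i)]
    (hf : ∀ i, _root_.commutator (f i) = ⊤) {X : Subgroup P} (F : (∀ i, f i) →* P)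
    (hF : Function.Injective F) (hFX : IsSubnormalIn F.range X) :
    ∃ N : Subgroup P, F.range ≤ N ∧ N ≤ X ∧ N ≤ normalizer (F.range : Set P) ∧
      X ≤ normalizer (N : Set P) := by
  set S := fun i => (MonoidHom.mulSingle f i).range.map F
  have : ∀ i, IsSimpleGroup (S i) := fun i =>
    ((MonoidHom.ofInjective (f := MonoidHom.mulSingle f i) (Pi.mulSingle_injective i)).trans
      ((MonoidHom.mulSingle f i).range.equivMapOfInjective F hF)).symm.isSimpleGroup
  have hS : ∀ i, ⁅S i, S i⁆ = S i := fun i => by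
    rw [← map_commutator, MonoidHom.range_eq_map, ← map_commutator, ← _root_.commutator_def, hf,
      ← MonoidHom.range_eq_map]
  have hSF : ∀ i, F.range ≤ normalizer (S i : Set P) := fun i => by
    rw [MonoidHom.range_eq_map, ← normalizer_eq_top_iff.mpr (normal_range_mulSingle i)]
    exact le_normalizer_map F
  have hG : ⨆ i, S i = F.range := by
    rw [← map_iSup, iSup_range_mulSingle, ← MonoidHom.range_eq_map]
  exact exists_le_normalizer_of_iSup_eq S hS
    (fun i => (IsSubnormalIn.of_le_normalizer (hG ▸ le_iSup S i) (hSF i)).trans hFX) hG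

end Pi

end Subgroup

theorem stmt13_general {Ω : Type*} {T : Type*} [Group T]
    [IsSimpleGroup T] (hnab : ∃ a b : T, a * b ≠ b * a)
    (k : ℕ)
    (G X : Subgroup (Equiv.Perm Ω))
    (hGT : Nonempty (↥G ≃* (Fin k → T)))
    (hsub : ∃ (r : ℕ) (c : ℕ → Subgroup (Equiv.Perm Ω)),
      c 0 = G ∧ c r = X ∧ ∀ i < r, c i ≤ c (i + 1) ∧
        ∀ g ∈ c (i + 1), ∀ n ∈ c i, g * n * g⁻¹ ∈ c i) :
    (∀ x ∈ X, ∀ g ∈ G, x * g * x⁻¹ ∈ G) ∨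
    (∃ N : Subgroup (Equiv.Perm Ω), G ≤ N ∧ N ≤ X ∧
      (∀ n ∈ N, ∀ g ∈ G, n * g * n⁻¹ ∈ G) ∧
      (∀ x ∈ X, ∀ n ∈ N, x * n * x⁻¹ ∈ N)) := by
  obtain ⟨e⟩ := hGT
  obtain ⟨r, c, rfl, rfl, hc⟩ := hsub
  set F : (Fin k → T) →* Equiv.Perm Ω := (c 0).subtype.comp e.symm.toMonoidHom
  have hF : F.range = c 0 := by
    rw [MonoidHom.range_comp, MonoidHom.range_eq_top.mpr e.symm.surjective,
      ← MonoidHom.range_eq_map, Subgroup.range_subtype]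
  have hX : Subgroup.IsSubnormalIn F.range (c r) := hF ▸
    Subgroup.IsSubnormalIn.of_chain c r fun i hi =>
      ⟨(hc i hi).1, Subgroup.le_normalizer_iff.mpr (hc i hi).2⟩
  obtain ⟨N, hGN, hNX, hNG, hXN⟩ := Subgroup.exists_le_normalizer_of_isSubnormalIn_range
    (fun _ => IsSimpleGroup.commutator_eq_top hnab) F
    (Subtype.val_injective.comp e.symm.injective) hX
  rw [hF] at hGN hNG
  exact Or.inr
    ⟨N, hGN, hNX, Subgroup.le_normalizer_iff.mp hNG, Subgroup.le_normalizer_iff.mp hXN⟩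

/-- Let `G` be a finite nonabelian characteristically simple
group (`G ≅ T^k`, `T` nonabelian simple), embedded as a transitive subgroup of a
symmetric group, and subnormal in `X`. Then either `G ⊴ X` or there is a
subgroup `N` with `G ⊴ N ⊴ X`; i.e. the subnormal defect of `G` in `X` is at
most 2. -/
theorem stmt13 {Ω : Type*} [Finite Ω] {T : Type*} [Group T] [Finite T]
    [IsSimpleGroup T] (hnab : ∃ a b : T, a * b ≠ b * a)
    (k : ℕ) (hk : 1 ≤ k)
    (G X : Subgroup (Equiv.Perm Ω)) (hGX : G ≤ X)
    (hGT : Nonempty (↥G ≃* (Fin k → T)))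
    (htrans : ∀ a b : Ω, ∃ g ∈ G, g a = b)
    (hsub : ∃ (r : ℕ) (c : ℕ → Subgroup (Equiv.Perm Ω)),
      c 0 = G ∧ c r = X ∧ ∀ i < r, c i ≤ c (i + 1) ∧
        ∀ g ∈ c (i + 1), ∀ n ∈ c i, g * n * g⁻¹ ∈ c i) :
    (∀ x ∈ X, ∀ g ∈ G, x * g * x⁻¹ ∈ G) ∨
    (∃ N : Subgroup (Equiv.Perm Ω), G ≤ N ∧ N ≤ X ∧
      (∀ n ∈ N, ∀ g ∈ G, n * g * n⁻¹ ∈ G) ∧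
      (∀ x ∈ X, ∀ n ∈ N, x * n * x⁻¹ ∈ N)) :=
  stmt13_general hnab k G X hGT hsub
end

section
/- Let T be a finite simple group, k ≥ 3, and X = T^k.(Out(T) × S_k) a primitive group of simple diagonal type on Ω with point stabilizer X_ω = {(t,...,t) : t ∈ Aut(T)}.(S_k) ≅ Aut(T) × S_k acting diagonally. Let t ∈ T be an element not conjugate in Aut(T) to t^{-1}, and g = (t, 1, ..., 1). Then X_ω g X_ω ≠ X_ω g^{-1} X_ω; consequently the coset graph Cos(X, X_ω, X_ω{g, g^{-1}}X_ω) is X-edge-transitive but not X-arc-transitive. -/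
/-! Right multiplication carries every edge of `Cos(X, H, H{g, g⁻¹}H)` to `{H, Hg}`, so the graph
is edge-transitive, and an element reversing the arc `(H, Hg)` would put `g⁻¹` in `HgH`.

For the diagonal stabilizer, suppose `h₁ g h₂ = g⁻¹` with `h₁ = (s, (α, σ))` and `h₂ = (u, _)`.
Coordinatewise, `s · α(g (σ⁻¹ i)) · α(u) = (g i)⁻¹`. Since `k ≥ 3`, some coordinate `j` avoids both
`0` and `σ 0`, which forces `s · α(u) = 1`. The coordinate `0` then gives `(conj s ∘ α)(t) = t⁻¹`
if `σ` fixes `0`, and `t = 1` otherwise; both are excluded by the hypothesis on `t`. -/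

/-- The action of `Aut(T) × S_k` on `T^k`: the automorphism is applied
diagonally and the permutation permutes coordinates. -/
def diagAut {T : Type*} [Group T] {k : ℕ} :
    MulAut T × Equiv.Perm (Fin k) →* MulAut (Fin k → T) where
  toFun p :=
    { toFun := fun f i => p.1 (f (p.2⁻¹ i))
      invFun := fun f i => p.1⁻¹ (f (p.2 i))
      left_inv := fun f => by ext i; simp
      right_inv := fun f => by ext i; simp
      map_mul' := fun f g => by ext i; simp [Pi.mul_apply] }
  map_one' := by ext f i; simp
  map_mul' := fun p q => by ext f i; simp

/-- The lift to `T^k ⋊ (Aut(T) × S_k)` of the point stabilizer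
`X_ω = D.(Out(T) × S_k)` of the diagonal-type action: the elements whose
`T^k`-part is a constant tuple. -/
def diagStab (T : Type*) [Group T] (k : ℕ) :
    Subgroup ((Fin k → T) ⋊[diagAut] (MulAut T × Equiv.Perm (Fin k))) where
  carrier := {w | ∃ s : T, w.left = fun _ => s}
  one_mem' := ⟨1, rfl⟩
  mul_mem' := by
    rintro a b ⟨s, hs⟩ ⟨u, hu⟩
    exact ⟨s * a.right.1 u, by
      rw [SemidirectProduct.mul_left, hs, hu]
      rfl⟩
  inv_mem' := by
    rintro a ⟨s, hs⟩
    exact ⟨a.right.1⁻¹ s⁻¹, by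
      rw [SemidirectProduct.inv_left, hs]
      rfl⟩

/-- The double coset `HgH`. -/
def doubleCoset {X : Type*} [Group X] (H : Subgroup X) (g : X) : Set X :=
  {z | ∃ h₁ ∈ H, ∃ h₂ ∈ H, z = h₁ * g * h₂}

/-- The set of right cosets `Hx` of `H` in `X`. -/
abbrev RightCoset {X : Type*} [Group X] (H : Subgroup X) :=
  Quotient (QuotientGroup.rightRel H)

/-- The right coset `Hx`. -/
def rmk {X : Type*} [Group X] (H : Subgroup X) (x : X) : RightCoset H :=
  Quotient.mk (QuotientGroup.rightRel H) x

section CosetGraph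

variable {X : Type*} [Group X] (H : Subgroup X)

lemma rmk_eq_rmk_iff {a b : X} : rmk H a = rmk H b ↔ b * a⁻¹ ∈ H :=
  Quotient.eq.trans QuotientGroup.rightRel_apply

lemma rmk_mul_right {a b : X} (h : rmk H a = rmk H b) (c : X) :
    rmk H (a * c) = rmk H (b * c) := by
  rwa [rmk_eq_rmk_iff, mul_inv_rev, mul_assoc, mul_inv_cancel_left, ← rmk_eq_rmk_iff]

lemma rmk_mul_mul_inv_eq {a b c z₁ z₂ : X}
    (h₁ : rmk H (a * z₁) = rmk H c) (h₂ : rmk H (b * z₂) = rmk H c) :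
    rmk H (a * (z₁ * z₂⁻¹)) = rmk H b := by
  simpa [mul_assoc] using rmk_mul_right H (h₁.trans h₂.symm) z₂⁻¹

/-- Every edge `{Hx, Hy}` of `Cos(X, H, H{g, g⁻¹}H)` is the image of `{H, Hg}` under right
multiplication. -/
lemma exists_mul_eq_baseEdge {g x y : X}
    (h : y * x⁻¹ ∈ doubleCoset H g ∪ doubleCoset H g⁻¹) :
    ∃ z, (rmk H (x * z) = rmk H 1 ∧ rmk H (y * z) = rmk H g) ∨
      (rmk H (x * z) = rmk H g ∧ rmk H (y * z) = rmk H 1) := by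
  simp only [rmk_eq_rmk_iff]
  rcases h with ⟨h₁, hh₁, h₂, hh₂, he⟩ | ⟨h₁, hh₁, h₂, hh₂, he⟩ <;>
    obtain rfl := mul_inv_eq_iff_eq_mul.mp he
  · exact ⟨x⁻¹ * h₂⁻¹, Or.inl ⟨by simpa [mul_assoc] using hh₂, by simpa [mul_assoc] using hh₁⟩⟩
  · exact ⟨x⁻¹ * h₂⁻¹ * g, Or.inr ⟨by simpa [mul_assoc] using hh₂, by simpa [mul_assoc] using hh₁⟩⟩

theorem cosetGraph_edgeTransitive (g : X) :
    ∀ x y x' y' : X,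
      y * x⁻¹ ∈ doubleCoset H g ∪ doubleCoset H g⁻¹ →
      y' * x'⁻¹ ∈ doubleCoset H g ∪ doubleCoset H g⁻¹ →
      ∃ z : X, (rmk H (x * z) = rmk H x' ∧ rmk H (y * z) = rmk H y') ∨
        (rmk H (x * z) = rmk H y' ∧ rmk H (y * z) = rmk H x') := by
  intro x y x' y' hxy hxy'
  obtain ⟨z₁, c₁⟩ := exists_mul_eq_baseEdge H hxy
  obtain ⟨z₂, c₂⟩ := exists_mul_eq_baseEdge H hxy'
  refine ⟨z₁ * z₂⁻¹, ?_⟩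
  rcases c₁ with ⟨c₁₁, c₁₂⟩ | ⟨c₁₁, c₁₂⟩ <;> rcases c₂ with ⟨c₂₁, c₂₂⟩ | ⟨c₂₁, c₂₂⟩
  · exact Or.inl ⟨rmk_mul_mul_inv_eq H c₁₁ c₂₁, rmk_mul_mul_inv_eq H c₁₂ c₂₂⟩
  · exact Or.inr ⟨rmk_mul_mul_inv_eq H c₁₁ c₂₂, rmk_mul_mul_inv_eq H c₁₂ c₂₁⟩
  · exact Or.inr ⟨rmk_mul_mul_inv_eq H c₁₁ c₂₂, rmk_mul_mul_inv_eq H c₁₂ c₂₁⟩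
  · exact Or.inl ⟨rmk_mul_mul_inv_eq H c₁₁ c₂₁, rmk_mul_mul_inv_eq H c₁₂ c₂₂⟩

lemma inv_mem_doubleCoset_of_reverses_baseArc {g z : X}
    (h₁ : rmk H (1 * z) = rmk H g) (h₂ : rmk H (g * z) = rmk H 1) :
    g⁻¹ ∈ doubleCoset H g := by
  rw [rmk_eq_rmk_iff] at h₁ h₂
  refine ⟨z⁻¹ * g⁻¹, by simpa using h₂, (g * z⁻¹)⁻¹, H.inv_mem (by simpa using h₁), by group⟩

theorem cosetGraph_not_arcTransitive {g : X} (hg : g⁻¹ ∉ doubleCoset H g) :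
    ¬ ∀ x y x' y' : X,
      y * x⁻¹ ∈ doubleCoset H g ∪ doubleCoset H g⁻¹ →
      y' * x'⁻¹ ∈ doubleCoset H g ∪ doubleCoset H g⁻¹ →
      ∃ z : X, rmk H (x * z) = rmk H x' ∧ rmk H (y * z) = rmk H y' := by
  intro harc
  have base : g * 1⁻¹ ∈ doubleCoset H g := ⟨1, H.one_mem, 1, H.one_mem, by group⟩
  have base' : 1 * g⁻¹ ∈ doubleCoset H g⁻¹ := ⟨1, H.one_mem, 1, H.one_mem, by group⟩
  obtain ⟨z, h₁, h₂⟩ := harc 1 g g 1 (Or.inl base) (Or.inr base')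
  exact hg (inv_mem_doubleCoset_of_reverses_baseArc H h₁ h₂)

lemma doubleCoset_ne_doubleCoset_inv {g : X} (hg : g⁻¹ ∉ doubleCoset H g) :
    doubleCoset H g ≠ doubleCoset H g⁻¹ := fun h =>
  hg (h ▸ ⟨1, H.one_mem, 1, H.one_mem, by group⟩)

end CosetGraph

section DiagonalType

variable {T : Type*} [Group T] {k : ℕ}

lemma diagStab_mul_mul_left_apply {s u : T} (v : Fin k → T)
    (h₁ h₂ : (Fin k → T) ⋊[diagAut] (MulAut T × Equiv.Perm (Fin k)))
    (hs : h₁.left = fun _ => s) (hu : h₂.left = fun _ => u) (i : Fin k) :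
    (h₁ * ⟨v, 1⟩ * h₂).left i = s * h₁.right.1 (v (h₁.right.2⁻¹ i)) * h₁.right.1 u := by
  simp only [SemidirectProduct.mul_left, SemidirectProduct.mul_right, Pi.mul_apply, hs, hu]
  simp [diagAut]

theorem inv_notMem_doubleCoset_diagStab (hk : 3 ≤ k) (a : Fin k) {t : T}
    (ht : ¬ ∃ α : MulAut T, α t = t⁻¹) :
    (⟨Pi.mulSingle a t, 1⟩ : (Fin k → T) ⋊[diagAut] (MulAut T × Equiv.Perm (Fin k)))⁻¹ ∉
      doubleCoset (diagStab T k) ⟨Pi.mulSingle a t, 1⟩ := by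
  rintro ⟨h₁, ⟨s, hs⟩, h₂, ⟨u, hu⟩, he⟩
  set α := h₁.right.1
  set σ := h₁.right.2
  have hcoord (i : Fin k) :
      s * α ((Pi.mulSingle a t : Fin k → T) (σ⁻¹ i)) * α u =
        ((Pi.mulSingle a t : Fin k → T) i)⁻¹ := by
    rw [← diagStab_mul_mul_left_apply _ h₁ h₂ hs hu, ← he]
    rfl
  obtain ⟨j, hja, hjσ⟩ := Fin.exists_ne_and_ne_of_two_lt a (σ a) hk
  have hsu : s * α u = 1 := by
    have hj := hcoord j
    rwa [Pi.mulSingle_eq_of_ne (fun h => hjσ (Equiv.Perm.inv_eq_iff_eq.mp h)),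
      Pi.mulSingle_eq_of_ne hja, map_one, mul_one, inv_one] at hj
  have ha := hcoord a
  rw [Pi.mulSingle_eq_same] at ha
  by_cases hσa : σ a = a
  · rw [Equiv.Perm.inv_eq_iff_eq.mpr hσa.symm, Pi.mulSingle_eq_same,
      eq_inv_of_mul_eq_one_right hsu] at ha
    exact ht ⟨MulAut.conj s * α, ha⟩
  · rw [Pi.mulSingle_eq_of_ne (fun h => hσa (Equiv.Perm.inv_eq_iff_eq.mp h).symm), map_one,
      mul_one, hsu, eq_comm, inv_eq_one] at ha
    exact ht ⟨1, by simp [ha]⟩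

end DiagonalType

theorem stmt15_general {T : Type*} [Group T]
    (k : ℕ) (hk : 3 ≤ k)
    (t : T) (hconj : ¬ ∃ α : MulAut T, α t = t⁻¹)
    (gv : Fin k → T) (hgv : gv = fun i => if i.val = 0 then t else 1)
    (g : (Fin k → T) ⋊[diagAut] (MulAut T × Equiv.Perm (Fin k)))
    (hg : g = ⟨gv, 1⟩) :
    -- the two double cosets are different
    doubleCoset (diagStab T k) g ≠ doubleCoset (diagStab T k) g⁻¹ ∧
    -- the coset graph is X-edge-transitive ...
    (∀ x y x' y' : (Fin k → T) ⋊[diagAut] (MulAut T × Equiv.Perm (Fin k)),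
      y * x⁻¹ ∈ doubleCoset (diagStab T k) g ∪ doubleCoset (diagStab T k) g⁻¹ →
      y' * x'⁻¹ ∈ doubleCoset (diagStab T k) g ∪ doubleCoset (diagStab T k) g⁻¹ →
      ∃ z : (Fin k → T) ⋊[diagAut] (MulAut T × Equiv.Perm (Fin k)),
        (rmk (diagStab T k) (x * z) = rmk (diagStab T k) x' ∧
          rmk (diagStab T k) (y * z) = rmk (diagStab T k) y') ∨
        (rmk (diagStab T k) (x * z) = rmk (diagStab T k) y' ∧
          rmk (diagStab T k) (y * z) = rmk (diagStab T k) x')) ∧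
    -- ... but not X-arc-transitive
    ¬ (∀ x y x' y' : (Fin k → T) ⋊[diagAut] (MulAut T × Equiv.Perm (Fin k)),
      y * x⁻¹ ∈ doubleCoset (diagStab T k) g ∪ doubleCoset (diagStab T k) g⁻¹ →
      y' * x'⁻¹ ∈ doubleCoset (diagStab T k) g ∪ doubleCoset (diagStab T k) g⁻¹ →
      ∃ z : (Fin k → T) ⋊[diagAut] (MulAut T × Equiv.Perm (Fin k)),
        rmk (diagStab T k) (x * z) = rmk (diagStab T k) x' ∧
        rmk (diagStab T k) (y * z) = rmk (diagStab T k) y') := by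
  let a : Fin k := ⟨0, by omega⟩
  obtain rfl : g = ⟨Pi.mulSingle a t, 1⟩ := by
    rw [hg, hgv]
    congr
    funext i
    simp [a, Pi.mulSingle_apply, Fin.ext_iff]
  have hg_inv := inv_notMem_doubleCoset_diagStab hk a hconj
  exact ⟨doubleCoset_ne_doubleCoset_inv _ hg_inv, cosetGraph_edgeTransitive _ _,
    cosetGraph_not_arcTransitive _ hg_inv⟩

/-- Let `T` be a finite simple group, `k ≥ 3`, and take the
group `X = T^k ⋊ (Aut(T) × S_k)` covering the primitive group of simple
diagonal type, with (lifted) point stabilizer `H = diagStab T k` corresponding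
to `X_ω ≅ Aut(T) × S_k`. Let `t ∈ T` be an element which is not conjugate in
`Aut(T)` to `t⁻¹`, and `g = (t,1,…,1)`. Then `X_ω g X_ω ≠ X_ω g⁻¹ X_ω`, and
consequently the coset graph `Cos(X, X_ω, X_ω{g,g⁻¹}X_ω)` is `X`-edge-transitive
but not `X`-arc-transitive. -/
theorem stmt15 {T : Type*} [Group T] [Finite T] [IsSimpleGroup T]
    (k : ℕ) (hk : 3 ≤ k)
    (t : T) (hconj : ¬ ∃ α : MulAut T, α t = t⁻¹)
    (gv : Fin k → T) (hgv : gv = fun i => if i.val = 0 then t else 1)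
    (g : (Fin k → T) ⋊[diagAut] (MulAut T × Equiv.Perm (Fin k)))
    (hg : g = ⟨gv, 1⟩) :
    -- the two double cosets are different
    doubleCoset (diagStab T k) g ≠ doubleCoset (diagStab T k) g⁻¹ ∧
    -- the coset graph is X-edge-transitive ...
    (∀ x y x' y' : (Fin k → T) ⋊[diagAut] (MulAut T × Equiv.Perm (Fin k)),
      y * x⁻¹ ∈ doubleCoset (diagStab T k) g ∪ doubleCoset (diagStab T k) g⁻¹ →
      y' * x'⁻¹ ∈ doubleCoset (diagStab T k) g ∪ doubleCoset (diagStab T k) g⁻¹ →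
      ∃ z : (Fin k → T) ⋊[diagAut] (MulAut T × Equiv.Perm (Fin k)),
        (rmk (diagStab T k) (x * z) = rmk (diagStab T k) x' ∧
          rmk (diagStab T k) (y * z) = rmk (diagStab T k) y') ∨
        (rmk (diagStab T k) (x * z) = rmk (diagStab T k) y' ∧
          rmk (diagStab T k) (y * z) = rmk (diagStab T k) x')) ∧
    -- ... but not X-arc-transitive
    ¬ (∀ x y x' y' : (Fin k → T) ⋊[diagAut] (MulAut T × Equiv.Perm (Fin k)),
      y * x⁻¹ ∈ doubleCoset (diagStab T k) g ∪ doubleCoset (diagStab T k) g⁻¹ →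
      y' * x'⁻¹ ∈ doubleCoset (diagStab T k) g ∪ doubleCoset (diagStab T k) g⁻¹ →
      ∃ z : (Fin k → T) ⋊[diagAut] (MulAut T × Equiv.Perm (Fin k)),
        rmk (diagStab T k) (x * z) = rmk (diagStab T k) x' ∧
        rmk (diagStab T k) (y * z) = rmk (diagStab T k) y') :=
  stmt15_general k hk t hconj gv hgv g hg
end
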